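/- arXiv:1305.0086 — 11 statements merged into one kernel-verified Lean document; each statement's English description precedes it below -/
import Mathlib

section
/- A model category is left proper if and only if every cofibration is an h-cofibration. -/
open CategoryTheory CategoryTheory.Limits

universe v u

/-- A model structure on a category: classes of weak equivalences, cofibrations and
fibrations, satisfying the model category axioms (two-out-of-three, closure of the
three classes under retracts, lifting, and factorization). -/
structure ModelStruct (C : Type u) [Category.{v} C] : Type (max u v) where
  /-- weak equivalences -/
  W : MorphismProperty C
  /-- cofibrations -/
  Cof : MorphismProperty C
  /-- fibrations -/
  Fib : MorphismProperty C
  W_of_isIso : ∀ {X Y : C} (f : X ⟶ Y), IsIso f → W f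
  W_comp : ∀ {X Y Z : C} (f : X ⟶ Y) (g : Y ⟶ Z), W f → W g → W (f ≫ g)
  W_of_comp_left : ∀ {X Y Z : C} (f : X ⟶ Y) (g : Y ⟶ Z), W f → W (f ≫ g) → W g
  W_of_comp_right : ∀ {X Y Z : C} (f : X ⟶ Y) (g : Y ⟶ Z), W g → W (f ≫ g) → W f
  W_retract : ∀ {X Y X' Y' : C} (f : X ⟶ Y) (f' : X' ⟶ Y') (i : X ⟶ X') (r : X' ⟶ X)
      (j : Y ⟶ Y') (s : Y' ⟶ Y), i ≫ r = 𝟙 X → j ≫ s = 𝟙 Y →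
      i ≫ f' = f ≫ j → r ≫ f = f' ≫ s → W f' → W f
  Cof_retract : ∀ {X Y X' Y' : C} (f : X ⟶ Y) (f' : X' ⟶ Y') (i : X ⟶ X') (r : X' ⟶ X)
      (j : Y ⟶ Y') (s : Y' ⟶ Y), i ≫ r = 𝟙 X → j ≫ s = 𝟙 Y →
      i ≫ f' = f ≫ j → r ≫ f = f' ≫ s → Cof f' → Cof f
  Fib_retract : ∀ {X Y X' Y' : C} (f : X ⟶ Y) (f' : X' ⟶ Y') (i : X ⟶ X') (r : X' ⟶ X)
      (j : Y ⟶ Y') (s : Y' ⟶ Y), i ≫ r = 𝟙 X → j ≫ s = 𝟙 Y →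
      i ≫ f' = f ≫ j → r ≫ f = f' ≫ s → Fib f' → Fib f
  lift : ∀ {A B X Y : C} (i : A ⟶ B) (p : X ⟶ Y), Cof i → Fib p → (W i ∨ W p) →
      ∀ (u : A ⟶ X) (v : B ⟶ Y), u ≫ p = i ≫ v → ∃ l : B ⟶ X, i ≫ l = u ∧ l ≫ p = v
  factorization_cof_trivFib : ∀ {X Y : C} (f : X ⟶ Y), ∃ (Z : C) (i : X ⟶ Z) (p : Z ⟶ Y),
      Cof i ∧ Fib p ∧ W p ∧ i ≫ p = f
  factorization_trivCof_fib : ∀ {X Y : C} (f : X ⟶ Y), ∃ (Z : C) (i : X ⟶ Z) (p : Z ⟶ Y),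
      Cof i ∧ W i ∧ Fib p ∧ i ≫ p = f

variable {C : Type u} [Category.{v} C]

/-- A morphism `f : X ⟶ Y` is an h-cofibration if cobase change along `f` preserves
weak equivalences: for every `g : X ⟶ A`, every weak equivalence `w : A ⟶ B`, and
pushouts `P = Y ⊔_X A` (of `g` along `f`) and `Q = Y ⊔_X B` (of `g ≫ w` along `f`),
the induced map `w' : P ⟶ Q` is a weak equivalence. -/
def HCof (M : ModelStruct C) {X Y : C} (f : X ⟶ Y) : Prop :=
  ∀ ⦃A B P Q : C⦄ (g : X ⟶ A) (w : A ⟶ B)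
    (a : A ⟶ P) (y : Y ⟶ P) (b : B ⟶ Q) (y' : Y ⟶ Q) (w' : P ⟶ Q),
    M.W w → IsPushout g f a y → IsPushout (g ≫ w) f b y' →
    a ≫ w' = w ≫ b → y ≫ w' = y' → M.W w'

/-- A model category is left proper if the pushout of a weak equivalence along a
cofibration is again a weak equivalence. -/
def LeftProper (M : ModelStruct C) : Prop :=
  ∀ ⦃X Y Z P : C⦄ (i : X ⟶ Y) (w : X ⟶ Z) (h : Z ⟶ P) (k : Y ⟶ P),
    M.Cof i → M.W w → IsPushout w i h k → M.W k

lemma cof_of_isPushout (M : ModelStruct C) {X Y A P : C} {f : X ⟶ Y} {g : X ⟶ A}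
    {a : A ⟶ P} {y : Y ⟶ P} (hp : IsPushout g f a y) (hf : M.Cof f) : M.Cof a := by
  -- first: `a` has LLP against trivial fibrations
  have llp : ∀ {U V : C} (p : U ⟶ V), M.Fib p → M.W p → ∀ (u : A ⟶ U) (v : P ⟶ V),
      u ≫ p = a ≫ v → ∃ l : P ⟶ U, a ≫ l = u ∧ l ≫ p = v := by
    intro U V p hFib hW u v hsq
    have hsq' : (g ≫ u) ≫ p = f ≫ (y ≫ v) := by
      rw [Category.assoc, hsq, ← Category.assoc, hp.w, Category.assoc]
    obtain ⟨l, hl1, hl2⟩ := M.lift f p hf hFib (Or.inr hW) (g ≫ u) (y ≫ v) hsq'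
    have hcomm : g ≫ u = f ≫ l := hl1.symm
    refine ⟨hp.desc u l hcomm, hp.inl_desc _ _ _, ?_⟩
    apply hp.hom_ext
    · rw [← Category.assoc, hp.inl_desc, hsq]
    · rw [← Category.assoc, hp.inr_desc, hl2]
  -- retract argument
  obtain ⟨Z, c, q, hc, hqFib, hqW, hcq⟩ := M.factorization_cof_trivFib a
  obtain ⟨l, hl1, hl2⟩ := llp q hqFib hqW c (𝟙 P) (by rw [hcq, Category.comp_id])
  exact M.Cof_retract a c (𝟙 A) (𝟙 A) l q (Category.id_comp _) hl2
    (by rw [Category.id_comp, hl1]) (by rw [Category.id_comp, hcq]) hc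

/-- A model category is left proper if and only if each cofibration is an
h-cofibration. -/
theorem statement_0 [HasPushouts C] (M : ModelStruct C) :
    LeftProper M ↔ ∀ {X Y : C} (f : X ⟶ Y), M.Cof f → HCof M f := by
  constructor
  · intro hLP X Y f hf
    intro A B P Q g w a y b y' w' hw hP hQ hcomm hy
    -- factor g = c ≫ q
    obtain ⟨A₀, c, q, hc, hqFib, hqW, hcq⟩ := M.factorization_cof_trivFib g
    -- pushout of c along f
    let P₀ := pushout c f
    have hP₀ : IsPushout c f (pushout.inl c f) (pushout.inr c f) := IsPushout.of_hasPushout c f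
    have hinl : M.Cof (pushout.inl c f) := cof_of_isPushout M hP₀ hf
    -- map r : P₀ ⟶ P
    have hrcomm : c ≫ (q ≫ a) = f ≫ y := by
      rw [← Category.assoc, hcq, hP.w]
    let r : P₀ ⟶ P := hP₀.desc (q ≫ a) y hrcomm
    have hinl_r : pushout.inl c f ≫ r = q ≫ a := hP₀.inl_desc _ _ _
    have hinr_r : pushout.inr c f ≫ r = y := hP₀.inr_desc _ _ _
    -- the right square is a pushout
    have hbig : IsPushout (c ≫ q) f a (pushout.inr c f ≫ r) := by
      rw [hcq, hinr_r]; exact hP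
    have hright : IsPushout q (pushout.inl c f) a r :=
      IsPushout.of_left hbig hinl_r.symm hP₀
    have hWr : M.W r := hLP (pushout.inl c f) q a r hinl hqW hright
    -- same with B, s := r ≫ w'
    have hinr_s : pushout.inr c f ≫ (r ≫ w') = y' := by
      rw [← Category.assoc, hinr_r, hy]
    have hbig' : IsPushout (c ≫ (q ≫ w)) f b (pushout.inr c f ≫ (r ≫ w')) := by
      rw [hinr_s]
      have : c ≫ q ≫ w = g ≫ w := by rw [← Category.assoc, hcq]
      rw [this]; exact hQ
    have hright' : IsPushout (q ≫ w) (pushout.inl c f) b (r ≫ w') := by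
      refine IsPushout.of_left hbig' ?_ hP₀
      rw [Category.assoc, ← hcomm, ← Category.assoc, ← hinl_r, Category.assoc]
    have hWs : M.W (r ≫ w') :=
      hLP (pushout.inl c f) (q ≫ w) b (r ≫ w') hinl (M.W_comp q w hqW hw) hright'
    exact M.W_of_comp_left r w' hWr hWs
  · intro h X Y Z P i w g k hi hw hpo
    have hsq1 : IsPushout (𝟙 X) i i (𝟙 Y) := IsPushout.of_id_fst
    have hsq2 : IsPushout (𝟙 X ≫ w) i g k := by rwa [Category.id_comp]
    exact h i hi (𝟙 X) w i (𝟙 Y) g k k hw hsq1 hsq2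
      (by rw [hpo.w]) (Category.id_comp k)
end

section
/- In any model category with binary coproducts, the class of h-cofibrations is closed under retracts in the arrow category, and under finite coproducts: if f : X → Y is an h-cofibration and Z is any object then f ⊔ 1_Z : X ⊔ Z → Y ⊔ Z is an h-cofibration; consequently the coproduct f ⊔ g of two h-cofibrations f and g is an h-cofibration. -/
/-!
By the pasting law for pushouts, h-cofibrations are stable under cobase change and under
composition. Now `f ⨿ 𝟙 Z` and `𝟙 Z ⨿ g` are cobase changes of `f` and `g` along coproduct
inclusions, and `f ⨿ g` is their composite. If `f` is a retract of `f'` (via `i, r` and `j, s`),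
every pushout along `f` of `g` is a retract of the pushout along `f'` of `r ≫ g`, compatibly with
the maps induced by `w`; so the map in question is a retract of a weak equivalence.
-/

open CategoryTheory CategoryTheory.Limits

universe v u

variable {C : Type u} [Category.{v} C]

namespace CategoryTheory.IsPushout

lemma of_coprod_inr_with_id [HasBinaryCoproducts C] {A B : C} (f : A ⟶ B) (X : C) :
    IsPushout coprod.inr f (coprod.map (𝟙 X) f) coprod.inr :=
  (of_coprod_inl_with_id f X).of_iso (Iso.refl A) (coprod.braiding A X) (Iso.refl B)
    (coprod.braiding B X) (by simp; exact coprod.inl_desc _ _) (by simp) (by ext <;> simp)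
    (by simp; exact coprod.inl_desc _ _)

variable {X Y X' Y' A P P' : C} {f : X ⟶ Y} {f' : X' ⟶ Y'} {i : X ⟶ X'} {r : X' ⟶ X}
  {j : Y ⟶ Y'} {s : Y' ⟶ Y} {g : X ⟶ A} {a : A ⟶ P} {y : Y ⟶ P} {a' : A ⟶ P'} {y' : Y' ⟶ P'}

lemma exists_retract_of_retract (hir : i ≫ r = 𝟙 X) (hjs : j ≫ s = 𝟙 Y)
    (hi : i ≫ f' = f ≫ j) (hr : r ≫ f = f' ≫ s)
    (hP : IsPushout g f a y) (hP' : IsPushout (r ≫ g) f' a' y') :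
    ∃ (ι : P ⟶ P') (ρ : P' ⟶ P), ι ≫ ρ = 𝟙 P ∧ a ≫ ι = a' ∧ y ≫ ι = j ≫ y' ∧
      a' ≫ ρ = a ∧ y' ≫ ρ = s ≫ y := by
  have hι : g ≫ a' = f ≫ j ≫ y' := by
    calc g ≫ a' = i ≫ (r ≫ g) ≫ a' := by simp [reassoc_of% hir]
      _ = f ≫ j ≫ y' := by rw [hP'.w, reassoc_of% hi]
  have hρ : (r ≫ g) ≫ a = f' ≫ s ≫ y := by
    rw [Category.assoc, hP.w, reassoc_of% hr]
  refine ⟨hP.desc a' (j ≫ y') hι, hP'.desc a (s ≫ y) hρ, ?_, by simp, by simp, by simp, by simp⟩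
  apply hP.hom_ext <;> simp [reassoc_of% hjs]

end CategoryTheory.IsPushout

namespace HCof

variable {M : ModelStruct C}

lemma of_isPushout {X Y X₁ Y₁ : C} {f : X ⟶ Y} {p : X ⟶ X₁} {f₁ : X₁ ⟶ Y₁} {q : Y ⟶ Y₁}
    (hf : HCof M f) (h : IsPushout p f f₁ q) : HCof M f₁ := by
  intro A B P Q g w a y b y' w' hw hP hQ ha hy
  refine hf (p ≫ g) w a (q ≫ y) b (q ≫ y') w' hw (h.paste_horiz hP) ?_ ha (by simp [hy])
  simpa using h.paste_horiz hQ

lemma coprod_map_id [HasBinaryCoproducts C] {X Y : C} {f : X ⟶ Y} (hf : HCof M f) (Z : C) :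
    HCof M (coprod.map f (𝟙 Z)) :=
  hf.of_isPushout (IsPushout.of_coprod_inl_with_id f Z)

lemma id_coprod_map [HasBinaryCoproducts C] {X Y : C} {f : X ⟶ Y} (hf : HCof M f) (Z : C) :
    HCof M (coprod.map (𝟙 Z) f) :=
  hf.of_isPushout (IsPushout.of_coprod_inr_with_id f Z)

lemma comp [HasPushouts C] {X Y Z : C} {f : X ⟶ Y} {h : Y ⟶ Z} (hf : HCof M f)
    (hh : HCof M h) : HCof M (f ≫ h) := by
  intro A B P Q g w a z b z' w' hw hP hQ ha hz
  have hP₁ := IsPushout.of_hasPushout g f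
  have hQ₁ := IsPushout.of_hasPushout (g ≫ w) f
  let w₁ := hP₁.desc (w ≫ pushout.inl _ _) (pushout.inr _ _) (by rw [← Category.assoc, hQ₁.w])
  have hw₁ : M.W w₁ := hf g w _ _ _ _ w₁ hw hP₁ hQ₁ (by simp [w₁]) (by simp [w₁])
  have hP₂ := hP.of_top' hP₁
  have hQ₂ := hQ.of_top' hQ₁
  refine hh (pushout.inr _ _) w₁ _ z _ z' w' hw₁ hP₂ (by simpa [w₁] using hQ₂) ?_ hz
  apply hP₁.hom_ext <;> simp [w₁, ha, hz]

lemma coprod_map [HasPushouts C] [HasBinaryCoproducts C] {X Y X' Y' : C} {f : X ⟶ Y}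
    {g : X' ⟶ Y'} (hf : HCof M f) (hg : HCof M g) : HCof M (coprod.map f g) := by
  simpa using (hf.coprod_map_id X').comp (hg.id_coprod_map Y)

lemma of_retract [HasPushouts C] {X Y X' Y' : C} {f : X ⟶ Y} {f' : X' ⟶ Y'} {i : X ⟶ X'}
    {r : X' ⟶ X} {j : Y ⟶ Y'} {s : Y' ⟶ Y} (hir : i ≫ r = 𝟙 X) (hjs : j ≫ s = 𝟙 Y)
    (hi : i ≫ f' = f ≫ j) (hr : r ≫ f = f' ≫ s) (hf' : HCof M f') : HCof M f := by
  intro A B P Q g w a y b y' w' hw hP hQ ha hy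
  have hP₁ := IsPushout.of_hasPushout (r ≫ g) f'
  have hQ₁ := IsPushout.of_hasPushout (r ≫ g ≫ w) f'
  let w₁ := hP₁.desc (w ≫ pushout.inl _ _) (pushout.inr _ _) (by simpa using hQ₁.w)
  have hw₁ : M.W w₁ :=
    hf' (r ≫ g) w _ _ _ _ w₁ hw hP₁ (by simpa using hQ₁) (by simp [w₁]) (by simp [w₁])
  obtain ⟨ιP, ρP, hιρP, haι, hyι, haρ, hyρ⟩ :=
    IsPushout.exists_retract_of_retract hir hjs hi hr hP hP₁
  obtain ⟨ιQ, ρQ, hιρQ, hbι, hyι', hbρ, hyρ'⟩ :=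
    IsPushout.exists_retract_of_retract hir hjs hi hr hQ hQ₁
  refine M.W_retract w' w₁ ιP ρP ιQ ρQ hιρP hιρQ ?_ ?_ hw₁
  · apply hP.hom_ext <;> simp [w₁, reassoc_of% haι, reassoc_of% hyι, reassoc_of% ha,
      reassoc_of% hy, hbι, hyι']
  · apply hP₁.hom_ext <;> simp [w₁, reassoc_of% haρ, reassoc_of% hyρ, ha, hy, hbρ, hyρ']

end HCof

/-- The class of h-cofibrations is closed under retracts in the arrow category and
under finite coproducts: if `f` is an h-cofibration and `Z` any object then
`f ⊔ 𝟙 Z` is an h-cofibration, and the coproduct of two h-cofibrations is an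
h-cofibration. -/
theorem statement_2 [HasPushouts C] [HasBinaryCoproducts C] (M : ModelStruct C) :
    (∀ {X Y X' Y' : C} (f : X ⟶ Y) (f' : X' ⟶ Y') (i : X ⟶ X') (r : X' ⟶ X)
        (j : Y ⟶ Y') (s : Y' ⟶ Y), i ≫ r = 𝟙 X → j ≫ s = 𝟙 Y →
        i ≫ f' = f ≫ j → r ≫ f = f' ≫ s → HCof M f' → HCof M f) ∧
    (∀ {X Y : C} (f : X ⟶ Y) (Z : C), HCof M f → HCof M (coprod.map f (𝟙 Z))) ∧
    (∀ {X Y X' Y' : C} (f : X ⟶ Y) (g : X' ⟶ Y'), HCof M f → HCof M g →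
        HCof M (coprod.map f g)) :=
  ⟨fun _ _ _ _ _ _ hir hjs hi hr hf' => HCof.of_retract hir hjs hi hr hf',
    fun _ Z hf => hf.coprod_map_id Z, fun _ _ hf hg => hf.coprod_map hg⟩
end

section
/- In a model category (with an initial object and binary coproducts), the class of weak equivalences is closed under finite coproducts (i.e. w ⊔ w' is a weak equivalence whenever w and w' are weak equivalences) if and only if every object of the model category is h-cofibrant. -/
open CategoryTheory CategoryTheory.Limits

universe v u

variable {C : Type u} [Category.{v} C]

/-- An object `Z` is h-cofibrant if the unique morphism from the initial object to
`Z` is an h-cofibration. -/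
def HCofibrant [HasInitial C] (M : ModelStruct C) (Z : C) : Prop :=
  HCof M (initial.to Z)

/-- The class of weak equivalences is closed under finite coproducts if and only if
all objects of the model category are h-cofibrant. -/
theorem statement_4 [HasPushouts C] [HasInitial C] [HasBinaryCoproducts C]
    (M : ModelStruct C) :
    (∀ {A B A' B' : C} (w : A ⟶ B) (w' : A' ⟶ B'), M.W w → M.W w' →
        M.W (coprod.map w w')) ↔
      ∀ Z : C, HCofibrant M Z := by
  constructor
  · -- closure under coproducts → all objects h-cofibrant
    intro hcl Z A B P Q g w a y b y' w' hw hP hQ hcomm hy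
    -- g and g ≫ w are initial morphisms
    have hg : g = initial.to A := Subsingleton.elim _ _
    have hgw : g ≫ w = initial.to B := Subsingleton.elim _ _
    have hstd : IsPushout (initial.to A) (initial.to Z)
        (coprod.inl : A ⟶ _) (coprod.inr : Z ⟶ _) :=
      IsPushout.of_hasBinaryCoproduct' A Z
    have hstd' : IsPushout (initial.to B) (initial.to Z)
        (coprod.inl : B ⟶ _) (coprod.inr : Z ⟶ _) :=
      IsPushout.of_hasBinaryCoproduct' B Z
    rw [hg] at hP
    rw [hgw] at hQ
    let e : A ⨿ Z ≅ P := hstd.isoIsPushout _ _ hP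
    let e' : B ⨿ Z ≅ Q := hstd'.isoIsPushout _ _ hQ
    have key : w' = e.inv ≫ coprod.map w (𝟙 Z) ≫ e'.hom := by
      rw [Iso.eq_inv_comp]
      apply coprod.hom_ext
      · rw [IsPushout.inl_isoIsPushout_hom_assoc, hcomm, coprod.inl_map_assoc,
          IsPushout.inl_isoIsPushout_hom]
      · rw [IsPushout.inr_isoIsPushout_hom_assoc, hy, coprod.inr_map_assoc,
          Category.id_comp, IsPushout.inr_isoIsPushout_hom]
    rw [key]
    exact M.W_comp _ _ (M.W_of_isIso _ inferInstance)
      (M.W_comp _ _ (hcl w (𝟙 Z) hw (M.W_of_isIso _ inferInstance))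
        (M.W_of_isIso _ inferInstance))
  · -- all objects h-cofibrant → closure under coproducts
    intro h A B A' B' w w' hw hw'
    have h1 : M.W (coprod.map w (𝟙 A')) := by
      refine h A' (initial.to A) w coprod.inl coprod.inr coprod.inl coprod.inr
        (coprod.map w (𝟙 A')) hw (IsPushout.of_hasBinaryCoproduct' A A') ?_ (by simp) (by simp)
      have : initial.to A ≫ w = initial.to B := Subsingleton.elim _ _
      rw [this]
      exact IsPushout.of_hasBinaryCoproduct' B A'
    have h2 : M.W (coprod.map (𝟙 B) w') := by
      refine h B (initial.to A') w' coprod.inr coprod.inl coprod.inr coprod.inl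
        (coprod.map (𝟙 B) w') hw' (IsPushout.of_hasBinaryCoproduct' B A').flip ?_ (by simp) (by simp)
      have : initial.to A' ≫ w' = initial.to B' := Subsingleton.elim _ _
      rw [this]
      exact (IsPushout.of_hasBinaryCoproduct' B B').flip
    have : coprod.map w w' = coprod.map w (𝟙 A') ≫ coprod.map (𝟙 B) w' := by simp
    rw [this]
    exact M.W_comp _ _ h1 h2
end

section
/- Let E be a left proper model category and f : X → Y a morphism. The following are equivalent: (i) f is an h-cofibration; (ii) for every factorization f = w ∘ c with c : X → Z a cofibration and w : Z → Y a weak equivalence, w is a cofiber equivalence relative to c; (iii) there exists a factorization f = w ∘ c with c : X → Z a cofibration and w : Z → Y a weak equivalence which is a cofiber equivalence relative to c. -/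
open CategoryTheory CategoryTheory.Limits

universe v u

variable {C : Type u} [Category.{v} C]

/-- Given a factorization `f = c ≫ w` of `f : X ⟶ Y` through `c : X ⟶ Z`, the
morphism `w : Z ⟶ Y` is a cofiber equivalence relative to `c` if for every
`g : X ⟶ B` the induced morphism `B ⊔_X Z ⟶ B ⊔_X Y` (from the pushout of `c`
along `g` to the pushout of `c ≫ w` along `g`) is a weak equivalence. -/
def CofiberEquiv (M : ModelStruct C) {X Z Y : C} (c : X ⟶ Z) (w : Z ⟶ Y) : Prop :=
  ∀ ⦃B P Q : C⦄ (g : X ⟶ B) (zP : Z ⟶ P) (bP : B ⟶ P) (yQ : Y ⟶ Q) (bQ : B ⟶ Q)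
    (u : P ⟶ Q),
    IsPushout c g zP bP → IsPushout (c ≫ w) g yQ bQ →
    zP ≫ u = w ≫ yQ → bP ≫ u = bQ → M.W u

/-- A morphism is a cofibration as soon as it has the left lifting property with
respect to all trivial fibrations (retract argument). -/
lemma cof_of_llp (M : ModelStruct C) {A B : C} (c : A ⟶ B)
    (h : ∀ {E F : C} (p : E ⟶ F), M.Fib p → M.W p → ∀ (u : A ⟶ E) (v : B ⟶ F),
      u ≫ p = c ≫ v → ∃ l : B ⟶ E, c ≫ l = u ∧ l ≫ p = v) : M.Cof c := by
  obtain ⟨Z, i, p, hi, hp, hwp, hip⟩ := M.factorization_cof_trivFib c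
  obtain ⟨l, hl1, hl2⟩ := h p hp hwp i (𝟙 B) (by rw [hip, Category.comp_id])
  exact M.Cof_retract c i (𝟙 A) (𝟙 A) l p (Category.id_comp _) hl2
    (by rw [Category.id_comp, ← hl1]) (by rw [Category.id_comp, hip]) hi

/-- Cofibrations are stable under cobase change. -/
lemma cof_pushout (M : ModelStruct C) {Z X Y P : C} {f : Z ⟶ X} {g : Z ⟶ Y}
    {inl : X ⟶ P} {inr : Y ⟶ P} (sq : IsPushout f g inl inr) (hg : M.Cof g) :
    M.Cof inl := by
  apply cof_of_llp
  intro E F p hp hwp u v huv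
  obtain ⟨l, hl1, hl2⟩ := M.lift g p hg hp (Or.inr hwp) (f ≫ u) (inr ≫ v)
    (by rw [Category.assoc, huv, ← Category.assoc, sq.w, Category.assoc])
  refine ⟨sq.desc u l hl1.symm, sq.inl_desc _ _ _, ?_⟩
  apply sq.hom_ext
  · rw [← Category.assoc, sq.inl_desc, huv]
  · rw [← Category.assoc, sq.inr_desc, hl2]

/-- h-cofibrations are stable under cobase change. -/
lemma hcof_pushout (M : ModelStruct C) {X Y T P0 : C} {f : X ⟶ Y} {t : X ⟶ T}
    {yT : Y ⟶ P0} {fT : T ⟶ P0} (sq : IsPushout f t yT fT) (hf : HCof M f) :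
    HCof M fT := by
  intro A B P Q g w a y b y' w' hw sq1 sq2 hc1 hc2
  have p1 : IsPushout (t ≫ g) f a (yT ≫ y) := (sq.paste_vert sq1.flip).flip
  have p2 : IsPushout ((t ≫ g) ≫ w) f b (yT ≫ y') := by
    rw [Category.assoc]
    exact (sq.paste_vert sq2.flip).flip
  exact hf (t ≫ g) w a (yT ≫ y) b (yT ≫ y') w' hw p1 p2 hc1
    (by rw [Category.assoc, hc2])

/-- Any cobase change of a weak equivalence along an h-cofibration is a weak
equivalence. -/
lemma weq_pushout_of_hcof (M : ModelStruct C) {A P B Q : C} {h : A ⟶ P}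
    (hh : HCof M h) {v : A ⟶ B} (hv : M.W v) {b : B ⟶ Q} {y' : P ⟶ Q}
    (sq : IsPushout v h b y') : M.W y' := by
  have p1 : IsPushout (𝟙 A) h h (𝟙 P) := IsPushout.of_id_fst
  have p2 : IsPushout (𝟙 A ≫ v) h b y' := by rwa [Category.id_comp]
  exact hh (𝟙 A) v h (𝟙 P) b y' y' hv p1 p2
    (by rw [sq.w]) (Category.id_comp _)

/-- In a left proper model category every cofibration is an h-cofibration. -/
lemma hcof_of_cof (M : ModelStruct C) (hlp : LeftProper M) {X Z : C} {c : X ⟶ Z}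
    (hc : M.Cof c) : HCof M c := by
  intro A B P Q g w a y b y' w' hw sq1 sq2 hc1 hc2
  have ha : M.Cof a := cof_pushout M sq1 hc
  have sqr : IsPushout w a b w' := by
    refine IsPushout.of_left ?_ hc1.symm sq1
    rwa [← hc2] at sq2
  exact hlp a w b w' ha hw sqr

/-- If `f = c ≫ w` with `c` a cofibration and `w` a cofiber equivalence relative
to `c`, then `f` is an h-cofibration (in a left proper model category). -/
lemma hcof_of_cofiberEquiv [HasPushouts C] (M : ModelStruct C) (hlp : LeftProper M)
    {X Z Y : C} (c : X ⟶ Z) (w : Z ⟶ Y) (hc : M.Cof c) (hce : CofiberEquiv M c w) :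
    HCof M (c ≫ w) := by
  intro A B P Q g v a y b y' w' hv sq1 sq2 hc1 hc2
  -- intermediate pushouts along the cofibration `c`
  let sqP : IsPushout g c (pushout.inl g c) (pushout.inr g c) :=
    IsPushout.of_hasPushout g c
  let sqQ : IsPushout (g ≫ v) c (pushout.inl (g ≫ v) c) (pushout.inr (g ≫ v) c) :=
    IsPushout.of_hasPushout (g ≫ v) c
  set a₁ := pushout.inl g c with ha₁
  set z₁ := pushout.inr g c with hz₁
  set b₁ := pushout.inl (g ≫ v) c with hb₁
  set z₁' := pushout.inr (g ≫ v) c with hz₁'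
  have wP : g ≫ a = c ≫ (w ≫ y) := by rw [sq1.w, Category.assoc]
  have wQ : (g ≫ v) ≫ b = c ≫ (w ≫ y') := by rw [sq2.w, Category.assoc]
  let u_P := sqP.desc a (w ≫ y) wP
  let u_Q := sqQ.desc b (w ≫ y') wQ
  have hu_P : M.W u_P :=
    hce g z₁ a₁ y a u_P sqP.flip sq1.flip (sqP.inr_desc _ _ _) (sqP.inl_desc _ _ _)
  have hu_Q : M.W u_Q :=
    hce (g ≫ v) z₁' b₁ y' b u_Q sqQ.flip sq2.flip (sqQ.inr_desc _ _ _)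
      (sqQ.inl_desc _ _ _)
  have eP1 : a₁ ≫ u_P = a := sqP.inl_desc _ _ _
  have eP2 : z₁ ≫ u_P = w ≫ y := sqP.inr_desc _ _ _
  have eQ1 : b₁ ≫ u_Q = b := sqQ.inl_desc _ _ _
  have eQ2 : z₁' ≫ u_Q = w ≫ y' := sqQ.inr_desc _ _ _
  have wV : g ≫ (v ≫ b₁) = c ≫ z₁' := by rw [← Category.assoc, sqQ.w]
  let v₁ := sqP.desc (v ≫ b₁) z₁' wV
  have eV1 : a₁ ≫ v₁ = v ≫ b₁ := sqP.inl_desc _ _ _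
  have eV2 : z₁ ≫ v₁ = z₁' := sqP.inr_desc _ _ _
  have sqv₁ : IsPushout v a₁ b₁ v₁ := by
    refine IsPushout.of_left ?_ eV1.symm sqP
    rw [eV2]
    exact sqQ
  have ha₁ : M.Cof a₁ := cof_pushout M sqP hc
  have hv₁ : M.W v₁ := hlp a₁ v b₁ v₁ ha₁ hv sqv₁
  have hcomm : v₁ ≫ u_Q = u_P ≫ w' := by
    apply sqP.hom_ext
    · rw [← Category.assoc, eV1, Category.assoc, eQ1,
        ← Category.assoc, eP1, hc1]
    · rw [← Category.assoc, eV2, eQ2,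
        ← Category.assoc, eP2, Category.assoc, hc2]
  have : M.W (u_P ≫ w') := by
    rw [← hcomm]; exact M.W_comp v₁ u_Q hv₁ hu_Q
  exact M.W_of_comp_left u_P w' hu_P this

/-- If `f = c ≫ w` is an h-cofibration with `c` a cofibration and `w` a weak
equivalence, then `w` is a cofiber equivalence relative to `c` (in a left proper
model category). -/
lemma cofiberEquiv_of_hcof [HasPushouts C] (M : ModelStruct C) (hlp : LeftProper M)
    {X Z Y : C} (c : X ⟶ Z) (w : Z ⟶ Y) (hc : M.Cof c) (hw : M.W w)
    (hf : HCof M (c ≫ w)) : CofiberEquiv M c w := by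
  intro B P Q g zP bP yQ bQ u sq1 sq2 h1 h2
  obtain ⟨B', g₁, g₂, hg₁, _, hg₂w, hgf⟩ := M.factorization_cof_trivFib g
  let sqP' : IsPushout c g₁ (pushout.inl c g₁) (pushout.inr c g₁) :=
    IsPushout.of_hasPushout c g₁
  let sqQ' : IsPushout (c ≫ w) g₁ (pushout.inl (c ≫ w) g₁) (pushout.inr (c ≫ w) g₁) :=
    IsPushout.of_hasPushout (c ≫ w) g₁
  set zP' := pushout.inl c g₁ with hzP'
  set bP' := pushout.inr c g₁ with hbP'
  set yQ' := pushout.inl (c ≫ w) g₁ with hyQ'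
  set bQ' := pushout.inr (c ≫ w) g₁ with hbQ'
  have wU : c ≫ (w ≫ yQ') = g₁ ≫ bQ' := by rw [← Category.assoc, sqQ'.w]
  let u' := sqP'.desc (w ≫ yQ') bQ' wU
  have eU1 : zP' ≫ u' = w ≫ yQ' := sqP'.inl_desc _ _ _
  have eU2 : bP' ≫ u' = bQ' := sqP'.inr_desc _ _ _
  -- `u'` is a weak equivalence by left properness
  have hzP'cof : M.Cof zP' := cof_pushout M sqP' hg₁
  have squ' : IsPushout w zP' yQ' u' := by
    refine IsPushout.of_left ?_ eU1.symm sqP'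
    rw [eU2]
    exact sqQ'
  have hu' : M.W u' := hlp zP' w yQ' u' hzP'cof hw squ'
  -- comparison map on the `P` side, a weak equivalence by left properness
  have wmP : c ≫ zP = g₁ ≫ (g₂ ≫ bP) := by rw [sq1.w, ← hgf, Category.assoc]
  let m_P := sqP'.desc zP (g₂ ≫ bP) wmP
  have emP1 : zP' ≫ m_P = zP := sqP'.inl_desc _ _ _
  have emP2 : bP' ≫ m_P = g₂ ≫ bP := sqP'.inr_desc _ _ _
  have sqmP : IsPushout bP' g₂ m_P bP := by
    refine IsPushout.of_top ?_ emP2 sqP'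
    rw [emP1, hgf]
    exact sq1
  have hbP'cof : M.Cof bP' := cof_pushout M sqP'.flip hc
  have hm_P : M.W m_P := hlp bP' g₂ bP m_P hbP'cof hg₂w sqmP.flip
  -- comparison map on the `Q` side, a weak equivalence via the h-cofibration `bQ'`
  have wmQ : (c ≫ w) ≫ yQ = g₁ ≫ (g₂ ≫ bQ) := by rw [sq2.w, ← hgf, Category.assoc]
  let m_Q := sqQ'.desc yQ (g₂ ≫ bQ) wmQ
  have emQ1 : yQ' ≫ m_Q = yQ := sqQ'.inl_desc _ _ _
  have emQ2 : bQ' ≫ m_Q = g₂ ≫ bQ := sqQ'.inr_desc _ _ _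
  have sqmQ : IsPushout bQ' g₂ m_Q bQ := by
    refine IsPushout.of_top ?_ emQ2 sqQ'
    rw [emQ1, hgf]
    exact sq2
  have hbQ' : HCof M bQ' := hcof_pushout M sqQ' hf
  have hm_Q : M.W m_Q := weq_pushout_of_hcof M hbQ' hg₂w sqmQ.flip
  -- the comparison square commutes
  have hcomm : u' ≫ m_Q = m_P ≫ u := by
    apply sqP'.hom_ext
    · rw [← Category.assoc, eU1, Category.assoc, emQ1,
        ← Category.assoc, emP1, h1]
    · rw [← Category.assoc, eU2, emQ2,
        ← Category.assoc, emP2, Category.assoc, h2]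
  have : M.W (m_P ≫ u) := by
    rw [← hcomm]; exact M.W_comp u' m_Q hu' hm_Q
  exact M.W_of_comp_left m_P u hm_P this

/-- In a left proper model category, for a morphism `f : X ⟶ Y` the following are
equivalent: (i) `f` is an h-cofibration; (ii) in every factorization of `f` into a
cofibration followed by a weak equivalence, the weak equivalence is a cofiber
equivalence; (iii) there exists a factorization of `f` into a cofibration followed
by a weak equivalence which is a cofiber equivalence. -/
theorem statement_6 [HasPushouts C] (M : ModelStruct C) (hlp : LeftProper M)
    {X Y : C} (f : X ⟶ Y) :
    (HCof M f ↔
      ∀ (Z : C) (c : X ⟶ Z) (w : Z ⟶ Y), M.Cof c → M.W w → c ≫ w = f →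
        CofiberEquiv M c w) ∧
    ((∀ (Z : C) (c : X ⟶ Z) (w : Z ⟶ Y), M.Cof c → M.W w → c ≫ w = f →
        CofiberEquiv M c w) ↔
      ∃ (Z : C) (c : X ⟶ Z) (w : Z ⟶ Y), M.Cof c ∧ M.W w ∧ c ≫ w = f ∧
        CofiberEquiv M c w) := by
  constructor
  · constructor
    · intro hf Z c w hc hw hcw
      refine cofiberEquiv_of_hcof M hlp c w hc hw ?_
      rwa [hcw]
    · intro h
      obtain ⟨Z, i, p, hi, _, hwp, hip⟩ := M.factorization_cof_trivFib f
      have h1 := hcof_of_cofiberEquiv M hlp i p hi (h Z i p hi hwp hip)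
      rwa [hip] at h1
  · constructor
    · intro h
      obtain ⟨Z, i, p, hi, _, hwp, hip⟩ := M.factorization_cof_trivFib f
      exact ⟨Z, i, p, hi, hwp, hip, h Z i p hi hwp hip⟩
    · rintro ⟨Z, c, w, hc, hw, hcw, hce⟩ Z' c' w' hc' hw' hcw'
      have hf : HCof M f := by
        have := hcof_of_cofiberEquiv M hlp c w hc hce
        rwa [hcw] at this
      refine cofiberEquiv_of_hcof M hlp c' w' hc' hw' ?_
      rwa [hcw']
end

section
/- In any model category, every couniversal weak equivalence is a trivial h-cofibration, i.e. it is both a weak equivalence and an h-cofibration. -/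
open CategoryTheory CategoryTheory.Limits

universe v u

variable {C : Type u} [Category.{v} C]

/-- A weak equivalence is couniversal if every cobase change of it (its pushout
along an arbitrary morphism) is again a weak equivalence. -/
def Couniversal (M : ModelStruct C) {X Y : C} (f : X ⟶ Y) : Prop :=
  M.W f ∧ ∀ ⦃A P : C⦄ (g : X ⟶ A) (inl : Y ⟶ P) (inr : A ⟶ P),
    IsPushout f g inl inr → M.W inr

/-- In any model category, couniversal weak equivalences are trivial
h-cofibrations, i.e. both weak equivalences and h-cofibrations. -/
theorem statement_7 [HasPushouts C] (M : ModelStruct C)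
    {X Y : C} (f : X ⟶ Y) (hf : Couniversal M f) :
    M.W f ∧ HCof M f := by
  refine ⟨hf.1, fun A B P Q g w a y b y' w' hw h1 h2 hcomm _ => ?_⟩
  have ha : M.W a := hf.2 g y a h1.flip
  have hb : M.W b := hf.2 (g ≫ w) y' b h2.flip
  exact M.W_of_comp_left a w' ha (hcomm ▸ M.W_comp w b hw hb)
end

section
/- In a left proper model category, every trivial h-cofibration is a couniversal weak equivalence: if f is both a weak equivalence and an h-cofibration, then every pushout of f along an arbitrary morphism is a weak equivalence. -/
open CategoryTheory CategoryTheory.Limits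

universe v u

variable {C : Type u} [Category.{v} C]

/-- In a left proper model category, trivial h-cofibrations are couniversal weak
equivalences. -/
theorem statement_8 [HasPushouts C] (M : ModelStruct C) (hlp : LeftProper M)
    {X Y : C} (f : X ⟶ Y) (hW : M.W f) (hH : HCof M f) :
    Couniversal M f := by
  refine ⟨hW, ?_⟩
  intro A P g inl inr hpo
  obtain ⟨Z, i, p, hi, _, hWp, hip⟩ := M.factorization_cof_trivFib g
  let Q := pushout i f
  have hQ : IsPushout i f (pushout.inl i f) (pushout.inr i f) := IsPushout.of_hasPushout i f
  have hcomm : i ≫ (p ≫ inr) = f ≫ inl := by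
    rw [← Category.assoc, hip, ← hpo.w]
  let w' : Q ⟶ P := hQ.desc (p ≫ inr) inl hcomm
  have h1 : pushout.inl i f ≫ w' = p ≫ inr := hQ.inl_desc _ _ _
  have h2 : pushout.inr i f ≫ w' = inl := hQ.inr_desc _ _ _
  have hP : IsPushout (i ≫ p) f inr inl := by rw [hip]; exact hpo.flip
  have hWw' : M.W w' := hH i p (pushout.inl i f) (pushout.inr i f) inr inl w' hWp hQ hP h1 h2
  have hWinl : M.W (pushout.inl i f) := hlp i f (pushout.inr i f) (pushout.inl i f) hi hW hQ.flip
  have : M.W (p ≫ inr) := by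
    rw [← h1]; exact M.W_comp _ _ hWinl hWw'
  exact M.W_of_comp_left p inr hWp this
end

section
/- Let E be a model category, K a saturated class of morphisms of E, and suppose the class W of weak equivalences is K-perfect. Then W ∩ K is closed under transfinite composition: for every well-ordered type λ and every functor X : λ → E which is smooth (X_β is the colimit of X restricted to {α : α < β} for every limit element β) and whose successor morphisms X_α → X_{α+1} all belong to W ∩ K, the transfinite composite X_0 → colim_λ X belongs to W ∩ K; in particular it is a weak equivalence. -/
open CategoryTheory CategoryTheory.Limits

universe v u

variable {C : Type u} [Category.{v} C]

/-- The inclusion of the subset `{α | α < β}` of a preorder, as a functor. -/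
def iioFunctor {Λ : Type v} [Preorder Λ] (β : Λ) : Set.Iio β ⥤ Λ :=
  Monotone.functor (f := fun x : Set.Iio β => (x : Λ)) (fun _ _ h => h)

/-- The cocone on the restriction of `X : Λ ⥤ C` to `{α | α < β}` with apex
`X.obj β`; `X` is smooth at a limit element `β` when this cocone is a colimit
cocone. -/
def iioCocone {Λ : Type v} [Preorder Λ] (β : Λ) (X : Λ ⥤ C) :
    Cocone (iioFunctor β ⋙ X) where
  pt := X.obj β
  ι :=
    { app := fun α => X.map (homOfLE α.2.le)
      naturality := by
        intro a b f
        dsimp [iioFunctor]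
        rw [Category.comp_id, ← X.map_comp]
        exact congrArg X.map (Subsingleton.elim _ _) }

/-- A class `K` of morphisms is closed under transfinite composition: for every
well-ordered type `Λ` (with bottom element) and every smooth functor `X : Λ ⥤ C`
(the value at every limit element is the colimit of the restriction to the
preceding elements) whose successor morphisms all lie in `K`, the transfinite
composite `X.obj ⊥ ⟶ colimit X` lies in `K`. -/
def ClosedUnderTransfiniteComposition (K : MorphismProperty C) : Prop :=
  ∀ (Λ : Type v) [LinearOrder Λ] [OrderBot Λ] [SuccOrder Λ] [WellFoundedLT Λ]
    (X : Λ ⥤ C) [HasColimit X],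
    (∀ β : Λ, Order.IsSuccLimit β → Nonempty (IsColimit (iioCocone β X))) →
    (∀ α : Λ, ¬IsMax α → K (X.map (homOfLE (Order.le_succ α)))) →
    K (colimit.ι X ⊥)

/-- A class `K` of morphisms is saturated if it is closed under cobase change,
retracts, and transfinite composition. -/
structure IsSaturated (K : MorphismProperty C) : Prop where
  cobase : ∀ {X Y A P : C} (f : X ⟶ Y) (g : X ⟶ A) (inl : Y ⟶ P) (inr : A ⟶ P),
    IsPushout f g inl inr → K f → K inr
  retract : ∀ {X Y X' Y' : C} (f : X ⟶ Y) (f' : X' ⟶ Y') (i : X ⟶ X') (r : X' ⟶ X)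
    (j : Y ⟶ Y') (s : Y' ⟶ Y), i ≫ r = 𝟙 X → j ≫ s = 𝟙 Y →
    i ≫ f' = f ≫ j → r ≫ f = f' ≫ s → K f' → K f
  transfinite : ClosedUnderTransfiniteComposition K

/-- The class `W` of weak equivalences is `K`-perfect if it is closed under
filtered colimits along morphisms of `K`: for every filtered category `J` and
every natural transformation `η : F ⟶ G` of functors `J ⥤ C` whose components are
weak equivalences and whose transition morphisms (of `F` and of `G`) lie in `K`,
the induced morphism `colimit F ⟶ colimit G` is a weak equivalence. -/
def KPerfect (W K : MorphismProperty C) : Prop :=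
  ∀ (J : Type v) [Category.{v} J] [IsFiltered J] (F G : J ⥤ C) (η : F ⟶ G)
    [HasColimit F] [HasColimit G],
    (∀ j : J, W (η.app j)) →
    (∀ {i j : J} (f : i ⟶ j), K (F.map f)) →
    (∀ {i j : J} (f : i ⟶ j), K (G.map f)) →
    W (colimMap η)

/-!
Let `X` be a smooth chain whose successor maps lie in `W ∩ K`. Every transition map
`X α ⟶ X β` lies in `K`: restricted to `[α, β]`, `X` is again a smooth chain of `K`-maps, and
its transfinite composite is `X α ⟶ X β` because `β` is terminal there. By well-founded
induction every `X ⊥ ⟶ X β` is a weak equivalence: at successors by composition, and at a limit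
`β` by `K`-perfectness applied to the map from the constant diagram on `X ⊥` (whose colimit over
the filtered set `{γ | γ < β}` is `X ⊥`) to `γ ↦ X γ` (whose colimit is `X β` by smoothness).
The same comparison over all of `λ` shows that `X ⊥ ⟶ colim X` is a weak equivalence.
-/

open Order

theorem CategoryTheory.MorphismProperty.map_homOfLE_iff_of_eq (K : MorphismProperty C)
    {Λ : Type*} [Preorder Λ] (X : Λ ⥤ C) {α β β' : Λ} (h : α ≤ β) (h' : α ≤ β') (hβ : β = β') :
    K (X.map (homOfLE h)) ↔ K (X.map (homOfLE h')) := by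
  subst hβ
  rfl

theorem IsSaturated.of_comp_mem_of_isIso {K : MorphismProperty C} (hK : IsSaturated K)
    {A B B' : C} (f : A ⟶ B) (g : B ⟶ B') [hg : IsIso g] (hfg : K (f ≫ g)) : K f :=
  hK.retract f (f ≫ g) (𝟙 A) (𝟙 A) g (inv g) (Category.id_comp _) (IsIso.hom_inv_id g)
    (by simp) (by simp) hfg

theorem IsSaturated.map_bot_mem {K : MorphismProperty C} (hK : IsSaturated K)
    {Λ : Type v} [LinearOrder Λ] [OrderBot Λ] [SuccOrder Λ] [WellFoundedLT Λ]
    (X : Λ ⥤ C) [X.IsWellOrderContinuous]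
    (hsucc : ∀ α : Λ, ¬IsMax α → K (X.map (homOfLE (le_succ α)))) (β : Λ) :
    K (X.map (homOfLE bot_le : ⊥ ⟶ β)) := by
  let Y := (Set.initialSegIic β).monotone.functor ⋙ X
  have hY : K (colimit.ι Y ⊥) :=
    hK.transfinite _ Y (fun γ hγ => ⟨Y.isColimitOfIsWellOrderContinuous γ hγ⟩)
      fun γ hγ => (MorphismProperty.map_homOfLE_iff_of_eq K X _ _
        (Set.Iic.coe_succ_of_not_isMax hγ)).mpr (hsucc γ.1 (Set.not_isMax_coe γ hγ))
  rw [← colimit.w Y (homOfLE le_top)] at hY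
  exact hK.of_comp_mem_of_isIso _ _ (hg := isIso_ι_of_isTerminal isTerminalTop Y) hY

theorem IsSaturated.map_mem_of_le {K : MorphismProperty C} (hK : IsSaturated K)
    {Λ : Type v} [LinearOrder Λ] [SuccOrder Λ] [WellFoundedLT Λ]
    (X : Λ ⥤ C) [X.IsWellOrderContinuous]
    (hsucc : ∀ α : Λ, ¬IsMax α → K (X.map (homOfLE (le_succ α)))) {α β : Λ} (h : α ≤ β) :
    K (X.map (homOfLE h)) :=
  hK.map_bot_mem ((Subtype.mono_coe (· ∈ Set.Ici α)).functor ⋙ X)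
    (fun γ hγ => (MorphismProperty.map_homOfLE_iff_of_eq K X _ _
      (coe_succ_of_mem (s := Set.Ici α) (γ.2.trans (le_succ _)))).mpr
        (hsucc γ.1 (Set.not_isMax_coe γ hγ)))
    ⟨β, h⟩

theorem KPerfect.W_comp_ι_app {M : ModelStruct C} {K : MorphismProperty C}
    (hperf : KPerfect M.W K) {J : Type v} [Category.{v} J] [IsFiltered J] {F : J ⥤ C}
    {c : Cocone F} (hc : IsColimit c) {A : C} (f : ∀ j, A ⟶ F.obj j)
    (hf : ∀ {i j : J} (g : i ⟶ j), f i ≫ F.map g = f j) (hfW : ∀ j, M.W (f j))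
    (hA : K (𝟙 A)) (hF : ∀ {i j : J} (g : i ⟶ j), K (F.map g)) (j : J) :
    M.W (f j ≫ c.ι.app j) := by
  let η : (Functor.const J).obj A ⟶ F :=
    { app := f
      naturality := fun _ _ g => by simpa using (hf g).symm }
  have hconst : ((Functor.const J).obj A).IsEventuallyConstantFrom j :=
    fun _ _ => inferInstanceAs (IsIso (𝟙 A))
  have := hconst.hasColimit
  have : HasColimit F := ⟨⟨c, hc⟩⟩
  have hη : M.W (colimMap η) := hperf J _ F η hfW (fun _ => hA) hF
  have hfac : colimit.ι _ j ≫ colimMap η ≫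
      ((colimit.isColimit F).coconePointUniqueUpToIso hc).hom = f j ≫ c.ι.app j := by
    rw [ι_colimMap_assoc, colimit.comp_coconePointUniqueUpToIso_hom]
  rw [← hfac]
  exact M.W_comp _ _ (M.W_of_isIso _ (hconst.isIso_ι_of_isColimit (colimit.isColimit _)))
    (M.W_comp _ _ hη (M.W_of_isIso _ inferInstance))

theorem ModelStruct.W_map_bot (M : ModelStruct C) {K : MorphismProperty C}
    (hperf : KPerfect M.W K) {Λ : Type v} [LinearOrder Λ] [OrderBot Λ] [SuccOrder Λ]
    [WellFoundedLT Λ] (X : Λ ⥤ C) [X.IsWellOrderContinuous]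
    (hsucc : ∀ α : Λ, ¬IsMax α → M.W (X.map (homOfLE (le_succ α))))
    (hK : ∀ {α β : Λ} (h : α ≤ β), K (X.map (homOfLE h))) (β : Λ) :
    M.W (X.map (homOfLE bot_le : ⊥ ⟶ β)) := by
  induction β using SuccOrder.limitRecOn with
  | isMin β hβ =>
    obtain rfl := hβ.eq_bot
    exact M.W_of_isIso _ (by simpa using inferInstanceAs (IsIso (𝟙 (X.obj ⊥))))
  | succ β hβ ih =>
    rw [← homOfLE_comp bot_le (le_succ β), X.map_comp]
    exact M.W_comp _ _ ih (hsucc β hβ)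
  | isSuccLimit β hβ ih =>
    have : Nonempty (Set.Iio β) := ⟨⟨⊥, Set.mem_Iio.mpr hβ.bot_lt⟩⟩
    have := hperf.W_comp_ι_app (X.isColimitOfIsWellOrderContinuous β hβ)
      (fun γ => X.map (homOfLE bot_le : ⊥ ⟶ γ.1)) (fun _ => (X.map_comp _ _).symm)
      (fun γ => ih γ.1 γ.2) (by simpa using hK le_rfl) (fun g => hK (leOfHom g))
      ⟨⊥, Set.mem_Iio.mpr hβ.bot_lt⟩
    rwa [← homOfLE_comp le_rfl bot_le, X.map_comp]

theorem statement_14_general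
    (M : ModelStruct C) (K : MorphismProperty C)
    (hK : IsSaturated K) (hperf : KPerfect M.W K) :
    ClosedUnderTransfiniteComposition
      (fun {_ _ : C} f => M.W f ∧ K f) := by
  intro Λ _ _ _ _ X _ hsmooth hsucc
  have : X.IsWellOrderContinuous := ⟨hsmooth⟩
  have hK_map : ∀ {α β : Λ} (h : α ≤ β), K (X.map (homOfLE h)) :=
    hK.map_mem_of_le X fun α hα => (hsucc α hα).2
  refine ⟨?_, hK.transfinite Λ X hsmooth fun α hα => (hsucc α hα).2⟩
  have h := hperf.W_comp_ι_app (colimit.isColimit X) (fun α => X.map (homOfLE bot_le))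
    (fun _ => (X.map_comp _ _).symm) (M.W_map_bot hperf X (fun α hα => (hsucc α hα).1) hK_map)
    (by simpa using hK_map le_rfl) (fun g => hK_map (leOfHom g)) ⊥
  rwa [show (homOfLE bot_le : (⊥ : Λ) ⟶ ⊥) = 𝟙 ⊥ from rfl, X.map_id, Category.id_comp] at h

/-- If the class of weak equivalences of a model category is `K`-perfect for a
saturated class `K`, then `W ∩ K` is closed under transfinite composition. -/
theorem statement_14 [HasColimitsOfSize.{v, v} C]
    (M : ModelStruct C) (K : MorphismProperty C)
    (hK : IsSaturated K) (hperf : KPerfect M.W K) :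
    ClosedUnderTransfiniteComposition
      (fun {_ _ : C} f => M.W f ∧ K f) :=
  statement_14_general M K hK hperf
end

section
/- Let E be a cocomplete monoidal model category whose class of weak equivalences is ⊗-perfect. Then the monoid axiom of Schwede–Shipley holds (the monoidal saturation of the class of trivial cofibrations is contained in the class of weak equivalences) if and only if for every trivial cofibration j and every object Z, the morphism j ⊗ 1_Z is a couniversal weak equivalence. -/
open CategoryTheory CategoryTheory.Limits

universe v u

variable {C : Type u} [Category.{v} C]

open MonoidalCategory

/-- A monoidal model category: a model structure together with a monoidal structure
satisfying the pushout–product axiom: for cofibrations `f : X ⟶ Y` and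
`g : X' ⟶ Y'`, the induced map `(Y ⊗ X') ⊔_{X ⊗ X'} (X ⊗ Y') ⟶ Y ⊗ Y'` is a
cofibration, and a trivial cofibration if `f` or `g` is a weak equivalence. -/
structure MonoidalModel (C : Type u) [Category.{v} C] [MonoidalCategory C] extends
    ModelStruct C where
  pushout_product :
    ∀ {X Y X' Y' P : C} (f : X ⟶ Y) (g : X' ⟶ Y')
      (inl : Y ⊗ X' ⟶ P) (inr : X ⊗ Y' ⟶ P) (h : P ⟶ Y ⊗ Y'),
      Cof f → Cof g →
      IsPushout (f ▷ X') (X ◁ g) inl inr →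
      inl ≫ h = Y ◁ g → inr ≫ h = f ▷ Y' →
      Cof h ∧ ((W f ∨ W g) → W h)

variable [MonoidalCategory C]

/-- A monoidal model category is h-monoidal if for each cofibration
(resp. trivial cofibration) `f` and each object `Z` the morphism `f ▷ Z`
(that is, `f ⊗ 𝟙 Z`) is an h-cofibration (resp. a trivial h-cofibration). -/
def HMonoidal (M : MonoidalModel C) : Prop :=
  (∀ {X Y : C} (f : X ⟶ Y) (Z : C), M.Cof f → HCof M.toModelStruct (f ▷ Z)) ∧
  (∀ {X Y : C} (f : X ⟶ Y) (Z : C), M.Cof f → M.W f →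
    HCof M.toModelStruct (f ▷ Z) ∧ M.W (f ▷ Z))

/-- `K` contains the tensor products `f ▷ Z = f ⊗ 𝟙 Z` for all `f` in `S` and all
objects `Z`, and is closed under cobase change, retracts and transfinite
composition. -/
def MonSaturatedContaining (S K : MorphismProperty C) : Prop :=
  (∀ {X Y : C} (f : X ⟶ Y), S f → ∀ Z : C, K (f ▷ Z)) ∧
  (∀ {X Y A P : C} (f : X ⟶ Y) (g : X ⟶ A) (inl : Y ⟶ P) (inr : A ⟶ P),
    IsPushout f g inl inr → K f → K inr) ∧
  (∀ {X Y X' Y' : C} (f : X ⟶ Y) (f' : X' ⟶ Y') (i : X ⟶ X') (r : X' ⟶ X)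
    (j : Y ⟶ Y') (s : Y' ⟶ Y), i ≫ r = 𝟙 X → j ≫ s = 𝟙 Y →
    i ≫ f' = f ≫ j → r ≫ f = f' ≫ s → K f' → K f) ∧
  ClosedUnderTransfiniteComposition K

/-- The monoidal saturation of a class `S` of morphisms: the smallest class of
morphisms containing `f ⊗ 𝟙 Z` for every `f ∈ S` and every object `Z`, and closed
under cobase change, transfinite composition and retracts. -/
def monSaturation (S : MorphismProperty C) : MorphismProperty C :=
  fun _ _ f => ∀ K : MorphismProperty C, MonSaturatedContaining S K → K f

/-!
Necessity: `j ▷ Z` and all its cobase changes lie in the monoidal saturation of the trivial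
cofibrations, hence are weak equivalences by the monoid axiom.

Sufficiency: the morphisms of that saturation which are couniversal weak equivalences form a
monoidally saturated class containing the generators `j ▷ Z`, so they contain the whole
saturation. Cobase change and retracts are formal; the point is transfinite composition. If
`X : J ⥤ C` is a transfinite composition of ⊗-cofibrations that are weak equivalences, then
`X ⊥ ⟶ colim X` is the map induced on colimits by `const (X ⊥) ⟶ X`, a natural weak
equivalence (by transfinite induction, running the same argument over `Set.Iio j` at limit
stages) between filtered diagrams of ⊗-cofibrations, so ⊗-perfectness makes it a weak
equivalence. A cobase change of a transfinite composition is the transfinite composition of the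
cobase changes of its steps; when the steps are couniversal these are again ⊗-cofibrations and
weak equivalences, and the same argument applies to them.
-/

namespace ModelStruct

variable {C : Type u} [Category.{v} C] (M : ModelStruct C)

instance : M.W.IsMultiplicative where
  id_mem X := M.W_of_isIso (𝟙 X) inferInstance
  comp_mem f g := M.W_comp f g

instance : M.W.RespectsIso :=
  MorphismProperty.respectsIso_of_isStableUnderComposition fun _ _ f (_ : IsIso f) =>
    M.W_of_isIso f inferInstance

def couniversalW : MorphismProperty C := fun _ _ f => Couniversal M f

lemma couniversalW_le_W : M.couniversalW ≤ M.W := fun _ _ _ hf => hf.1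

end ModelStruct

namespace Couniversal

variable {C : Type u} [Category.{v} C] {M : ModelStruct C}

lemma of_isPushout {X Y A P : C} {f : X ⟶ Y} {g : X ⟶ A} {inl : Y ⟶ P} {inr : A ⟶ P}
    (hf : Couniversal M f) (sq : IsPushout f g inl inr) : Couniversal M inr :=
  ⟨hf.2 g inl inr sq, fun _ _ g' inl' inr' sq' =>
    hf.2 (g ≫ g') (inl ≫ inl') inr' (sq.paste_vert sq')⟩

lemma of_retract [HasPushouts C] {X Y X' Y' : C} {f : X ⟶ Y} {f' : X' ⟶ Y'} {i : X ⟶ X'}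
    {r : X' ⟶ X} {j : Y ⟶ Y'} {s : Y' ⟶ Y} (hir : i ≫ r = 𝟙 X) (hjs : j ≫ s = 𝟙 Y)
    (h₁ : i ≫ f' = f ≫ j) (h₂ : r ≫ f = f' ≫ s) (hf' : Couniversal M f') :
    Couniversal M f := by
  refine ⟨M.W_retract f f' i r j s hir hjs h₁ h₂ hf'.1, fun A P g inl inr sq => ?_⟩
  let sq' := IsPushout.of_hasPushout f' (r ≫ g)
  let u : P ⟶ pushout f' (r ≫ g) := sq.desc (j ≫ pushout.inl _ _) (pushout.inr _ _)
    (by rw [← reassoc_of% h₁, pushout.condition, Category.assoc, reassoc_of% hir])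
  let v : pushout f' (r ≫ g) ⟶ P := sq'.desc (s ≫ inl) inr
    (by rw [← reassoc_of% h₂, sq.w, Category.assoc])
  have huv : u ≫ v = 𝟙 P := sq.hom_ext (by simp [u, v, reassoc_of% hjs]) (by simp [u, v])
  exact M.W_retract inr (pushout.inr f' (r ≫ g)) (𝟙 A) (𝟙 A) u v (by simp) huv
    (by simp [u]) (by simp [v]) (hf'.2 _ _ _ sq')

end Couniversal

section Saturation

variable {C : Type u} [Category.{v} C]

lemma ClosedUnderTransfiniteComposition.of_isStableUnderTransfiniteComposition
    (K : MorphismProperty C) [K.IsStableUnderTransfiniteComposition.{v}] :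
    ClosedUnderTransfiniteComposition K := fun Λ _ _ _ _ X _ hlim hsucc =>
  K.transfiniteCompositionsOfShape_le Λ _
    ⟨{ F := X
       isoBot := Iso.refl _
       isWellOrderContinuous := ⟨hlim⟩
       incl := (colimit.cocone X).ι
       isColimit := colimit.isColimit X
       map_mem := hsucc }⟩

lemma ClosedUnderTransfiniteComposition.isStableUnderTransfiniteComposition
    {K : MorphismProperty C} [K.RespectsIso] (hK : ClosedUnderTransfiniteComposition K) :
    K.IsStableUnderTransfiniteComposition.{v} where
  isStableUnderTransfiniteCompositionOfShape J _ _ _ _ := ⟨fun _ _ f ⟨h⟩ => by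
    have : HasColimit h.F := ⟨⟨⟨_, h.isColimit⟩⟩⟩
    refine (K.arrow_mk_iso_iff (Arrow.isoMk h.isoBot
      (colimit.isoColimitCocone ⟨_, h.isColimit⟩) ?_)).1
      (hK J h.F (fun m hm => Functor.IsWellOrderContinuous.nonempty_isColimit m hm) h.map_mem)
    simp only [Arrow.mk_hom, colimit.isoColimitCocone_ι_hom]
    exact ((Iso.inv_comp_eq _).1 h.fac).symm⟩

variable [MonoidalCategory C] {S K : MorphismProperty C}

lemma MonSaturatedContaining.respectsIso (hK : MonSaturatedContaining S K) : K.RespectsIso :=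
  .of_respects_arrow_iso _ fun f g e hf =>
    hK.2.2.1 g.hom f.hom e.inv.left e.hom.left e.inv.right e.hom.right
      (by simp [← Arrow.comp_left]) (by simp [← Arrow.comp_right])
      (Arrow.w e.inv) (Arrow.w e.hom) hf

lemma MonSaturatedContaining.isStableUnderCobaseChange (hK : MonSaturatedContaining S K) :
    K.IsStableUnderCobaseChange :=
  ⟨fun sq hf => hK.2.1 _ _ _ _ sq.flip hf⟩

lemma monSaturatedContaining_monSaturation (S : MorphismProperty C) :
    MonSaturatedContaining S (monSaturation S) :=
  ⟨fun f hf Z _ hK => hK.1 f hf Z,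
   fun f g inl inr sq hf K hK => hK.2.1 f g inl inr sq (hf K hK),
   fun f f' i r j s hir hjs h₁ h₂ hf' K hK =>
    hK.2.2.1 f f' i r j s hir hjs h₁ h₂ (hf' K hK),
   fun Λ _ _ _ _ X _ hlim hsucc K hK => hK.2.2.2 Λ X hlim fun α hα => hsucc α hα K hK⟩

lemma monSaturation_mono {S S' : MorphismProperty C} (h : S ≤ S') :
    monSaturation S ≤ monSaturation S' :=
  fun _ _ _ hf K hK => hf K ⟨fun g hg Z => hK.1 g (h _ hg) Z, hK.2⟩

instance (S : MorphismProperty C) : (monSaturation S).IsStableUnderCobaseChange :=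
  (monSaturatedContaining_monSaturation S).isStableUnderCobaseChange

instance (S : MorphismProperty C) : (monSaturation S).IsStableUnderTransfiniteComposition.{v} :=
  have := (monSaturatedContaining_monSaturation S).respectsIso
  (monSaturatedContaining_monSaturation S).2.2.2.isStableUnderTransfiniteComposition

end Saturation

section Pushout

variable {C : Type u} [Category.{v} C]

/-- Colimits over a connected category commute with pushouts along constant diagrams. -/
noncomputable def isColimitOfIsPushoutApp {J : Type*} [Category J] [IsConnected J]
    {F G : J ⥤ C} {X A : C} {α : (Functor.const J).obj X ⟶ F} {g : X ⟶ A}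
    {ιl : F ⟶ G} {ιr : (Functor.const J).obj A ⟶ G}
    (hpo : ∀ j, IsPushout (α.app j) g (ιl.app j) (ιr.app j))
    {c : Cocone F} (hc : IsColimit c) (d : Cocone G) (j₀ : J) {i : c.pt ⟶ d.pt} {r : A ⟶ d.pt}
    (hP : IsPushout (α.app j₀ ≫ c.ι.app j₀) g i r)
    (hl : ∀ j, ιl.app j ≫ d.ι.app j = c.ι.app j ≫ i)
    (hr : ∀ j, ιr.app j ≫ d.ι.app j = r) :
    IsColimit d := by
  have hconst (s : Cocone G) (j : J) : ιr.app j ≫ s.ι.app j = ιr.app j₀ ≫ s.ι.app j₀ :=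
    constant_of_preserves_morphisms (fun j => ιr.app j ≫ s.ι.app j)
      (fun _ _ φ => by simpa using (ιr.naturality_assoc φ (s.ι.app _)).symm) j j₀
  exact
    { desc s := hP.desc (hc.desc ((Cocone.precompose ιl).obj s)) (ιr.app j₀ ≫ s.ι.app j₀)
        (by simpa using (hpo j₀).w =≫ s.ι.app j₀)
      fac s j := (hpo j).hom_ext
        (by rw [reassoc_of% (hl j), hP.inl_desc, hc.fac]; rfl)
        (by rw [reassoc_of% (hr j), hP.inr_desc, hconst s j])
      uniq s m hm := hP.hom_ext
        (by
          rw [hP.inl_desc]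
          exact hc.hom_ext fun j => by rw [← reassoc_of% (hl j), hm, hc.fac]; rfl)
        (by rw [hP.inr_desc, ← hr j₀, Category.assoc, hm]) }

end Pushout

namespace CategoryTheory.MorphismProperty.TransfiniteCompositionOfShape

variable {C : Type u} [Category.{v} C] {P : MorphismProperty C} {J : Type*} [LinearOrder J]
  [OrderBot J] [SuccOrder J] [WellFoundedLT J] {X Y : C} {f : X ⟶ Y}
  (h : P.TransfiniteCompositionOfShape J f)

noncomputable def fromBot : (Functor.const J).obj X ⟶ h.F :=
  (Functor.const J).map h.isoBot.inv ≫ (coneOfDiagramInitial isInitialBot h.F).π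

@[simp]
lemma fromBot_app_comp_map {i j : J} (φ : i ⟶ j) :
    h.fromBot.app i ≫ h.F.map φ = h.fromBot.app j := by
  simpa using (h.fromBot.naturality φ).symm

@[simp]
lemma fromBot_app_comp_incl_app (j : J) : h.fromBot.app j ≫ h.incl.app j = f := by
  simp [fromBot]

@[simp]
lemma fromBot_app_bot : h.fromBot.app ⊥ = h.isoBot.inv := by
  simp [fromBot]

instance : IsIso (h.fromBot.app ⊥) := by
  rw [fromBot_app_bot]
  infer_instance

noncomputable def ofIsPushout [HasPushouts C] {A Q : C} {g : X ⟶ A} {inl : Y ⟶ Q}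
    {inr : A ⟶ Q} (sq : IsPushout f g inl inr) : P.pushouts.TransfiniteCompositionOfShape J inr :=
  -- the pushout is taken in `J ⥤ C`, so it is the diagram `j ↦ F j ⊔_X A`
  let ιl := pushout.inl h.fromBot ((Functor.const J).map g)
  let ιr := pushout.inr h.fromBot ((Functor.const J).map g)
  have hpo (j : J) : IsPushout (h.fromBot.app j) g (ιl.app j) (ιr.app j) := by
    simpa using (IsPushout.of_hasPushout h.fromBot ((Functor.const J).map g)).map
      ((evaluation J C).obj j)
  have hιr {i j : J} (φ : i ⟶ j) : ιr.app i ≫ (pushout h.fromBot _).map φ = ιr.app j := by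
    simpa using (ιr.naturality φ).symm
  have : IsConnected J := IsFiltered.isConnected J
  let d : Cocone (pushout h.fromBot ((Functor.const J).map g)) :=
    { pt := Q
      ι :=
        { app j := (hpo j).desc (h.incl.app j ≫ inl) inr
            (by rw [← Category.assoc, fromBot_app_comp_incl_app, sq.w])
          naturality i j φ := (hpo i).hom_ext
            (by simpa [ιl, ← NatTrans.naturality_assoc] using h.incl.naturality_assoc φ inl)
            (by rw [reassoc_of% (hιr φ)]; simp) } }
  have : IsIso (ιr.app ⊥) := (hpo ⊥).isIso_inr_of_isIso
  { F := pushout h.fromBot ((Functor.const J).map g)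
    isoBot := (asIso (ιr.app ⊥)).symm
    isWellOrderContinuous := ⟨fun m hm => by
      have : Nonempty (Set.Iio m) := ⟨⟨⊥, hm.bot_lt⟩⟩
      have := IsFiltered.isConnected (Set.Iio m)
      let e := (Set.principalSegIio m).monotone.functor
      have hbot : (Functor.whiskerLeft e h.fromBot).app ⟨⊥, hm.bot_lt⟩ ≫
          ((Set.principalSegIio m).cocone h.F).ι.app ⟨⊥, hm.bot_lt⟩ = h.fromBot.app m :=
        h.fromBot_app_comp_map _
      exact ⟨isColimitOfIsPushoutApp (α := Functor.whiskerLeft e h.fromBot)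
        (ιl := Functor.whiskerLeft e ιl) (ιr := Functor.whiskerLeft e ιr) (fun j => hpo j.1)
        (h.F.isColimitOfIsWellOrderContinuous m hm) _ ⟨⊥, hm.bot_lt⟩ (i := ιl.app m)
        (r := ιr.app m) (by rw [hbot]; exact hpo m) (fun j => (ιl.naturality _).symm)
        (fun j => hιr _)⟩⟩
    incl := d.ι
    isColimit := isColimitOfIsPushoutApp hpo h.isColimit d ⊥ (by simpa using sq)
      (fun j => (hpo j).inl_desc _ _ _) (fun j => (hpo j).inr_desc _ _ _)
    fac := (hpo ⊥).inr_desc _ _ _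
    map_mem j hj := ⟨_, _, _, _, _, h.map_mem j hj,
      (IsPushout.of_left (by simpa [hιr] using hpo (Order.succ j)) (ιl.naturality _)
        (hpo j)).flip⟩ }

end CategoryTheory.MorphismProperty.TransfiniteCompositionOfShape

namespace KPerfect

variable {C : Type u} [Category.{v} C] {W K : MorphismProperty C}

lemma map_mem (hW : KPerfect W K) [W.RespectsIso] {J : Type v} [Category.{v} J] [IsFiltered J]
    {F G : J ⥤ C} {c₁ : Cocone F} {c₂ : Cocone G} (hc₁ : IsColimit c₁)
    (hc₂ : IsColimit c₂) (η : F ⟶ G) (hη : ∀ j, W (η.app j))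
    (hF : ∀ {i j : J} (φ : i ⟶ j), K (F.map φ))
    (hG : ∀ {i j : J} (φ : i ⟶ j), K (G.map φ)) : W (hc₁.map c₂ η) := by
  have : HasColimit F := ⟨⟨⟨_, hc₁⟩⟩⟩
  have : HasColimit G := ⟨⟨⟨_, hc₂⟩⟩⟩
  refine (W.arrow_mk_iso_iff (Arrow.isoMk (colimit.isoColimitCocone ⟨_, hc₁⟩)
    (colimit.isoColimitCocone ⟨_, hc₂⟩) ?_)).1 (hW J F G η hη hF hG)
  exact colimit.hom_ext fun j => by simp

lemma app_comp_ι_mem (hW : KPerfect W K) [W.RespectsIso] [K.ContainsIdentities] {J : Type v}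
    [Category.{v} J] [IsFiltered J] {F : J ⥤ C} {c : Cocone F} (hc : IsColimit c)
    (hF : ∀ {i j : J} (φ : i ⟶ j), K (F.map φ)) {B : C} (η : (Functor.const J).obj B ⟶ F)
    (hη : ∀ j, W (η.app j)) (j : J) : W (η.app j ≫ c.ι.app j) := by
  have := IsFiltered.isConnected J
  have e : η.app j ≫ c.ι.app j = (isColimitConstCocone J B).map c η :=
    (IsColimit.ι_map (isColimitConstCocone J B) c η j).symm.trans (Category.id_comp _)
  rw [e]
  exact hW.map_mem (isColimitConstCocone J B) hc η hη (fun _ => K.id_mem B) hF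

lemma mem_of_transfiniteCompositionOfShape (hW : KPerfect W K) [W.IsMultiplicative]
    [W.RespectsIso] [K.IsStableUnderTransfiniteComposition.{v}] {J : Type v} [LinearOrder J]
    [SuccOrder J] [OrderBot J] [WellFoundedLT J] {X Y : C} {f : X ⟶ Y}
    (h : (K ⊓ W).TransfiniteCompositionOfShape J f) : W f := by
  have hK : ∀ {i j : J} (φ : i ⟶ j), K (h.F.map φ) := (h.ofLE inf_le_left).mem_map
  have hbot (j : J) : W (h.fromBot.app j) := by
    induction j using SuccOrder.limitRecOn with
    | isMin j hj =>
      obtain rfl := hj.eq_bot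
      exact W.of_isIso _
    | succ j hj ih =>
      rw [← h.fromBot_app_comp_map (homOfLE (Order.le_succ j))]
      exact W.comp_mem _ _ ih (h.map_mem j hj).2
    | isSuccLimit j hj ih =>
      have : Nonempty (Set.Iio j) := ⟨⟨⊥, hj.bot_lt⟩⟩
      rw [← h.fromBot_app_comp_map (homOfLE hj.bot_lt.le)]
      exact hW.app_comp_ι_mem (h.F.isColimitOfIsWellOrderContinuous j hj) (fun _ => hK _)
        (Functor.whiskerLeft _ h.fromBot) (fun k => ih k k.2) ⟨⊥, hj.bot_lt⟩
  simpa using hW.app_comp_ι_mem h.isColimit hK h.fromBot hbot ⊥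

end KPerfect

section Couniversal

variable {C : Type u} [Category.{v} C] [HasPushouts C] {K : MorphismProperty C}
  [K.IsStableUnderTransfiniteComposition.{v}] [K.IsStableUnderCobaseChange]

lemma ModelStruct.couniversal_of_transfiniteCompositionOfShape (M : ModelStruct C)
    (hperf : KPerfect M.W K) {J : Type v} [LinearOrder J] [SuccOrder J] [OrderBot J]
    [WellFoundedLT J] {X Y : C} {f : X ⟶ Y}
    (h : (K ⊓ M.couniversalW).TransfiniteCompositionOfShape J f) : Couniversal M f := by
  have hpushouts : (K ⊓ M.couniversalW).pushouts ≤ K ⊓ M.W := by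
    rintro _ _ q ⟨_, _, p, _, _, hp, sq⟩
    exact ⟨K.of_isPushout sq hp.1, hp.2.2 _ _ _ sq.flip⟩
  exact ⟨hperf.mem_of_transfiniteCompositionOfShape
      (h.ofLE (inf_le_inf_left K M.couniversalW_le_W)),
    fun _ _ _ _ _ sq => hperf.mem_of_transfiniteCompositionOfShape
      ((h.ofIsPushout sq).ofLE hpushouts)⟩

end Couniversal

lemma MonoidalModel.monSaturatedContaining_monSaturation_inf_couniversalW (M : MonoidalModel C)
    [HasPushouts C] (hperf : KPerfect M.W (monSaturation M.Cof))
    (hcu : ∀ {X Y : C} (j : X ⟶ Y), M.Cof j → M.W j → ∀ Z : C,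
      Couniversal M.toModelStruct (j ▷ Z)) :
    MonSaturatedContaining (M.Cof ⊓ M.W) (monSaturation (M.Cof ⊓ M.W) ⊓ M.couniversalW) := by
  have hS := monSaturatedContaining_monSaturation (M.Cof ⊓ M.W)
  refine ⟨fun f hf Z => ⟨hS.1 f hf Z, hcu f hf.1 hf.2 Z⟩,
    fun f g inl inr sq hf => ⟨hS.2.1 f g inl inr sq hf.1, hf.2.of_isPushout sq⟩,
    fun f f' i r j s hir hjs h₁ h₂ hf => ⟨hS.2.2.1 f f' i r j s hir hjs h₁ h₂ hf.1,
      Couniversal.of_retract hir hjs h₁ h₂ hf.2⟩, ?_⟩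
  have : MorphismProperty.IsStableUnderTransfiniteComposition.{v}
      (monSaturation (M.Cof ⊓ M.W) ⊓ M.couniversalW) :=
    ⟨fun J _ _ _ _ => ⟨fun _ _ f ⟨h⟩ =>
      ⟨(monSaturation (M.Cof ⊓ M.W)).transfiniteCompositionsOfShape_le J f
          ⟨h.ofLE inf_le_left⟩,
        M.couniversal_of_transfiniteCompositionOfShape hperf
          (h.ofLE (inf_le_inf_right _ (monSaturation_mono inf_le_left)))⟩⟩⟩
  exact .of_isStableUnderTransfiniteComposition _

/-- In a cocomplete monoidal model category whose class of weak equivalences is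
⊗-perfect (perfect with respect to the monoidal saturation of the cofibrations),
the monoid axiom of Schwede–Shipley holds if and only if the tensor product of a
trivial cofibration with an arbitrary object is a couniversal weak equivalence. -/
theorem statement_15 [HasColimitsOfSize.{v, v} C]
    (M : MonoidalModel C)
    (hperf : KPerfect M.W (monSaturation M.Cof)) :
    (∀ {X Y : C} (f : X ⟶ Y),
        monSaturation (fun {_ _ : C} g => M.Cof g ∧ M.W g) f → M.W f) ↔
      (∀ {X Y : C} (j : X ⟶ Y), M.Cof j → M.W j → ∀ Z : C,
        Couniversal M.toModelStruct (j ▷ Z)) := by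
  have hS := monSaturatedContaining_monSaturation (M.Cof ⊓ M.W)
  constructor
  · intro hmon X Y j hj hw Z
    have hjZ := hS.1 j ⟨hj, hw⟩ Z
    exact ⟨hmon _ hjZ, fun _ _ g _ _ sq => hmon _ (hS.2.1 _ g _ _ sq hjZ)⟩
  · intro hcu X Y f hf
    exact (hf _ (M.monSaturatedContaining_monSaturation_inf_couniversalW hperf hcu)).2.1
end

section
/- Let E be a model category and T a monad on E such that the Eilenberg–Moore category Alg_T of T-algebras has pushouts. If the free T-algebra map F_T(v) is a relative h-cofibration for every cofibration v of E with cofibrant domain, then F_T(u) is a relative h-cofibration for every cofibration u of E. -/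
open CategoryTheory CategoryTheory.Limits

universe v u

variable {C : Type u} [Category.{v} C]

/-- For a monad `T` on `C` and a morphism `u : X ⟶ Y` in `C`, the free `T`-algebra
map `F_T(u)` is a relative h-cofibration if for every `T`-algebra map
`α : F_T(X) ⟶ R`, every map of `T`-algebras `f : R ⟶ S` whose underlying morphism
is a weak equivalence and whose (co)domain have cofibrant underlying objects, and
pushouts `P = R[u,α]` of `F_T(u)` along `α` and `Q = S[u, α ≫ f]` of `F_T(u)`
along `α ≫ f` in the category of `T`-algebras, the induced map `P ⟶ Q` has
underlying morphism a weak equivalence. -/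
def RelHCof [HasInitial C] (M : ModelStruct C) (T : Monad C)
    {X Y : C} (u : X ⟶ Y) : Prop :=
  ∀ ⦃R S : T.Algebra⦄ (α : T.free.obj X ⟶ R) (f : R ⟶ S)
    ⦃P Q : T.Algebra⦄ (inlP : T.free.obj Y ⟶ P) (inrP : R ⟶ P)
    (inlQ : T.free.obj Y ⟶ Q) (inrQ : S ⟶ Q) (v : P ⟶ Q),
    M.W (T.forget.map f) →
    M.Cof (initial.to (T.forget.obj R)) → M.Cof (initial.to (T.forget.obj S)) →
    IsPushout (T.free.map u) α inlP inrP →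
    IsPushout (T.free.map u) (α ≫ f) inlQ inrQ →
    inrP ≫ v = f ≫ inrQ → inlP ≫ v = inlQ →
    M.W (T.forget.map v)


/-- The pushout (cobase change) of a cofibration is a cofibration. -/
lemma ModelStruct.cof_of_isPushout {C : Type u} [Category.{v} C] (M : ModelStruct C)
    {X Y Z P : C} {f : X ⟶ Y} {g : X ⟶ Z} {inl : Y ⟶ P} {inr : Z ⟶ P}
    (sq : IsPushout f g inl inr) (hf : M.Cof f) : M.Cof inr := by
  obtain ⟨W, j, p, hj, hp, hwp, hfac⟩ := M.factorization_cof_trivFib inr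
  obtain ⟨l, hl1, hl2⟩ := M.lift f p hf hp (Or.inr hwp) (g ≫ j) inl
    (by rw [Category.assoc, hfac, ← sq.w])
  have hd1 : inl ≫ sq.desc l j hl1 = l := sq.inl_desc _ _ _
  have hd2 : inr ≫ sq.desc l j hl1 = j := sq.inr_desc _ _ _
  have hdp : sq.desc l j hl1 ≫ p = 𝟙 P := by
    apply sq.hom_ext
    · rw [← Category.assoc, hd1, hl2, Category.comp_id]
    · rw [← Category.assoc, hd2, hfac, Category.comp_id]
  exact M.Cof_retract inr j (𝟙 Z) (𝟙 Z) (sq.desc l j hl1) p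
    (Category.id_comp _) hdp (by rw [Category.id_comp, hd2]) (by rw [Category.id_comp, hfac]) hj

/-- If the free `T`-algebra functor takes cofibrations with cofibrant domain to
relative h-cofibrations, then it takes all cofibrations to relative
h-cofibrations. -/
theorem statement_16 [HasInitial C] [HasPushouts C]
    (M : ModelStruct C) (T : Monad C) [HasPushouts T.Algebra]
    (h : ∀ {X Y : C} (v : X ⟶ Y), M.Cof v → M.Cof (initial.to X) →
      RelHCof M T v) :
    ∀ {X Y : C} (u : X ⟶ Y), M.Cof u → RelHCof M T u := by
  intro X Y u hu
  intro R S α f P Q inlP inrP inlQ inrQ v hwf hcR hcS hP hQ hsq hlsq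
  haveI : PreservesColimitsOfSize.{0, 0} T.free := T.adj.leftAdjoint_preservesColimits
  set a : X ⟶ T.forget.obj R := T.adj.homEquiv X R α with ha
  have hα : T.free.map a ≫ T.adj.counit.app R = α := by
    have h1 := T.adj.homEquiv_counit (X := X) (Y := R) (g := a)
    rw [← h1, ha, Equiv.symm_apply_apply]
  set β : T.free.obj (T.forget.obj R) ⟶ R := T.adj.counit.app R with hβ
  -- pushout of `u` along `a` in `C`
  set iY : Y ⟶ pushout u a := pushout.inl u a with hiY
  set u' : T.forget.obj R ⟶ pushout u a := pushout.inr u a with hu'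
  have sq : IsPushout u a iY u' := IsPushout.of_hasPushout u a
  have hcof : M.Cof u' := M.cof_of_isPushout sq hu
  -- image of the square under the free functor
  have sqF : IsPushout (T.free.map u) (T.free.map a) (T.free.map iY) (T.free.map u') :=
    sq.map T.free
  -- rewrite the given pushout squares with `α = F a ≫ β`
  have hP' : IsPushout (T.free.map u) (T.free.map a ≫ β) inlP inrP := by
    rwa [hα]
  have hQ' : IsPushout (T.free.map u) (T.free.map a ≫ (β ≫ f)) inlQ inrQ := by
    rwa [← Category.assoc, hα]
  have sqP := hP'.of_top' sqF
  have sqQ := hQ'.of_top' sqF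
  set w : T.free.obj (pushout u a) ⟶ P :=
    sqF.desc inlP (β ≫ inrP) (by rw [hP'.w, Category.assoc]) with hw
  set w2 : T.free.obj (pushout u a) ⟶ Q :=
    sqF.desc inlQ ((β ≫ f) ≫ inrQ) (by rw [hQ'.w]; simp only [Category.assoc]) with hw2
  have hwv : w ≫ v = w2 := by
    apply sqF.hom_ext
    · rw [← Category.assoc, sqF.inl_desc, sqF.inl_desc, hlsq]
    · rw [← Category.assoc, sqF.inr_desc, sqF.inr_desc, Category.assoc, hsq,
        Category.assoc]
  exact h u' hcof hcR β f w inrP w2 inrQ v hwf hcR hcS sqP sqQ hsq hwv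
end

section
/- Let D be a small category, Φ : D → Cat a functor into the category of small categories, and (C, (ι_d : Φ(d) → C)_{d ∈ D}) a colimit cocone for Φ in Cat. Let E be a cocomplete category and X : C → E a functor. For each object d of D, let L(d) = colim_{Φ(d)} (ι_d ⋙ X); this extends to a functor L : D → E (for δ : d → d', the map L(d) → L(d') is induced by Φ(δ), using ι_{d'} ∘ Φ(δ) = ι_d). Then the canonical morphism colim_D L → colim_C X, induced by the comparison maps colim_{Φ(d)}(ι_d ⋙ X) → colim_C X, is an isomorphism. -/
open CategoryTheory CategoryTheory.Limits

universe v u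

/-!
A cocone on `X : C ⥤ E` with vertex `P` is the same as a section of the projection
`CostructuredArrow X P ⥤ C`, and such sections are exactly the functors
`colimit.toCostructuredArrow X ⋙ CostructuredArrow.map m` for `m : colimit X ⟶ P`.
When `C = colim Φ` in `Cat`, the legs of the colimit cocone of `L`, read as lifts
`Φ d ⥤ CostructuredArrow X (colimit L)` of the legs `ι_d`, are compatible and glue to
such a section; its morphism `colimit X ⟶ colimit L` is the inverse of `u`, both
composites being identities by uniqueness in the universal property of `colim Φ`.
-/

universe v₁ v₂ v₃ u₁ u₂ u₃

namespace CategoryTheory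

variable {A : Type u₁} [Category.{v₁} A] {C : Type u₂} [Category.{v₂} C]
  {E : Type u₃} [Category.{v₃} E]

lemma CostructuredArrow.functor_ext {X : C ⥤ E} {P : E} {F G : A ⥤ CostructuredArrow X P}
    (h : F ⋙ proj X P = G ⋙ proj X P)
    (hhom : ∀ a, (F.obj a).hom = X.map (eqToHom (Functor.congr_obj h a)) ≫ (G.obj a).hom) :
    F = G :=
  Functor.ext (fun a => obj_ext _ _ (Functor.congr_obj h a) (hhom a).symm) fun a b g => by
    ext
    simp only [comp_left, eqToHom_left]
    exact Functor.congr_hom h g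

end CategoryTheory

namespace CategoryTheory.Limits

variable {C : Type u₁} [Category.{v₁} C] {E : Type u₂} [Category.{v₂} E]
  (X : C ⥤ E) [HasColimit X] {P : E}

lemma exists_eq_colimit_toCostructuredArrow_comp_map (s : C ⥤ CostructuredArrow X P)
    (hs : s ⋙ CostructuredArrow.proj X P = 𝟭 C) :
    ∃ m : colimit X ⟶ P, s = colimit.toCostructuredArrow X ⋙ CostructuredArrow.map m := by
  have hleft : ∀ x, (s.obj x).left = x := Functor.congr_obj hs
  let ξ : Cocone X :=
    { pt := P
      ι.app x := X.map (eqToHom (hleft x).symm) ≫ (s.obj x).hom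
      ι.naturality x y g := by
        have hg : (s.map g).left = eqToHom (hleft x) ≫ g ≫ eqToHom (hleft y).symm :=
          Functor.congr_hom hs g
        simp only [Functor.const_obj_obj, Functor.const_obj_map, Category.comp_id]
        rw [← CostructuredArrow.w (s.map g), hg]
        simp only [← Functor.map_comp_assoc, eqToHom_trans_assoc, eqToHom_refl,
          Category.id_comp] }
  refine ⟨colimit.desc X ξ, Functor.ext (fun x => ?_) (fun x y g => ?_)⟩
  · exact (CostructuredArrow.obj_ext _ _ (hleft x).symm (colimit.ι_desc ξ x).symm).symm
  · ext
    simp only [CostructuredArrow.comp_left, CostructuredArrow.eqToHom_left]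
    exact Functor.congr_hom hs g

end CategoryTheory.Limits

namespace CategoryTheory.Cat

lemma functor_ext_of_isColimit {D : Type*} [Category D] {Φ : D ⥤ Cat.{v, u}} {c : Cocone Φ}
    (hc : IsColimit c) {T : Type u} [Category.{v} T] {F G : (c.pt : Type u) ⥤ T}
    (h : ∀ d, (c.ι.app d).toFunctor ⋙ F = (c.ι.app d).toFunctor ⋙ G) : F = G :=
  congrArg Hom.toFunctor <|
    hc.hom_ext (W := Cat.of T) (f := F.toCatHom) (f' := G.toCatHom) fun d => Cat.ext (h d)

variable {D : Type u} [SmallCategory D] {Φ : D ⥤ Cat.{u, u}} (c : Cocone Φ)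
  {E : Type v} [Category.{u} E] [HasColimitsOfSize.{u, u} E] (X : (c.pt : Type u) ⥤ E)
  {L : D ⥤ E} (hobj : ∀ d : D, L.obj d = colimit ((c.ι.app d).toFunctor ⋙ X))

noncomputable def liftToCostructuredArrow (s : Cocone L) (d : D) :
    Φ.obj d ⥤ CostructuredArrow X s.pt :=
  (c.ι.app d).toFunctor.toCostructuredArrow X s.pt
    (fun a => colimit.ι ((c.ι.app d).toFunctor ⋙ X) a ≫ eqToHom (hobj d).symm ≫ s.ι.app d)
    (fun g => colimit.w_assoc ((c.ι.app d).toFunctor ⋙ X) g _)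

lemma map_comp_liftToCostructuredArrow
    (hmap : ∀ {d d' : D} (δ : d ⟶ d') (a : Φ.obj d),
      colimit.ι ((c.ι.app d).toFunctor ⋙ X) a ≫ eqToHom (hobj d).symm ≫ L.map δ ≫
          eqToHom (hobj d') =
        eqToHom (show X.obj ((c.ι.app d).toFunctor.obj a) =
              X.obj ((c.ι.app d').toFunctor.obj ((Φ.map δ).toFunctor.obj a)) by rw [← c.w δ]; rfl) ≫
          colimit.ι ((c.ι.app d').toFunctor ⋙ X) ((Φ.map δ).toFunctor.obj a))
    (s : Cocone L) {d d' : D} (δ : d ⟶ d') :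
    (Φ.map δ).toFunctor ⋙ liftToCostructuredArrow c X hobj s d' =
      liftToCostructuredArrow c X hobj s d := by
  refine CostructuredArrow.functor_ext (congrArg Hom.toFunctor (c.w δ)) fun a => ?_
  change colimit.ι ((c.ι.app d').toFunctor ⋙ X) ((Φ.map δ).toFunctor.obj a) ≫
      eqToHom (hobj d').symm ≫ s.ι.app d' =
    X.map (eqToHom (by rw [← c.w δ]; rfl)) ≫
      colimit.ι ((c.ι.app d).toFunctor ⋙ X) a ≫ eqToHom (hobj d).symm ≫ s.ι.app d
  calc _ = eqToHom (by rw [← c.w δ]; rfl) ≫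
        (colimit.ι ((c.ι.app d).toFunctor ⋙ X) a ≫ eqToHom (hobj d).symm ≫ L.map δ ≫
          eqToHom (hobj d')) ≫ eqToHom (hobj d').symm ≫ s.ι.app d' := by
        rw [hmap]; simp
    _ = _ := by simp [eqToHom_map]

lemma liftToCostructuredArrow_comp_map (s : Cocone L) (m : s.pt ⟶ colimit X)
    (hm : ∀ d, s.ι.app d ≫ m = eqToHom (hobj d) ≫ colimit.pre X (c.ι.app d).toFunctor)
    (d : D) :
    liftToCostructuredArrow c X hobj s d ⋙ CostructuredArrow.map m =
      (c.ι.app d).toFunctor ⋙ colimit.toCostructuredArrow X := by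
  refine CostructuredArrow.functor_ext rfl fun a => ?_
  change
    (colimit.ι ((c.ι.app d).toFunctor ⋙ X) a ≫ eqToHom (hobj d).symm ≫ s.ι.app d) ≫ m =
    X.map (𝟙 _) ≫ colimit.ι X ((c.ι.app d).toFunctor.obj a)
  simp [hm]

lemma pre_comp_eq_of_comp_map_eq (s : Cocone L) (m : colimit X ⟶ s.pt) (d : D)
    (hm : (c.ι.app d).toFunctor ⋙ colimit.toCostructuredArrow X ⋙ CostructuredArrow.map m =
      liftToCostructuredArrow c X hobj s d) :
    colimit.pre X (c.ι.app d).toFunctor ≫ m = eqToHom (hobj d).symm ≫ s.ι.app d := by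
  refine colimit.hom_ext fun a => ?_
  rw [colimit.ι_pre_assoc]
  exact eq_of_heq (congr_arg_heq Comma.hom (Functor.congr_obj hm a))

end CategoryTheory.Cat

open Cat

/-- Let `D` be a small category, `Φ : D ⥤ Cat`, and `(c.pt, (c.ι.app d)_d)` a
colimit cocone for `Φ` in `Cat`. Let `E` be a cocomplete category and
`X : c.pt ⥤ E` a functor. Let `L : D ⥤ E` be the functor with
`L.obj d = colimit (c.ι.app d ⋙ X)` whose action on a morphism `δ : d ⟶ d'` is
induced by `Φ.map δ` (this is expressed by the hypotheses `hobj` and `hmap`).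
Then the canonical morphism `colimit L ⟶ colimit X` induced by the comparison
maps `colimit (c.ι.app d ⋙ X) ⟶ colimit X` is an isomorphism. -/
theorem statement_17 {D : Type u} [SmallCategory D] (Φ : D ⥤ Cat.{u, u})
    (c : Cocone Φ) (hc : IsColimit c)
    {E : Type v} [Category.{u} E] [HasColimitsOfSize.{u, u} E]
    (X : (c.pt : Type u) ⥤ E)
    (L : D ⥤ E)
    (hobj : ∀ d : D, L.obj d = colimit ((c.ι.app d).toFunctor ⋙ X))
    (hmap : ∀ {d d' : D} (δ : d ⟶ d') (a : Φ.obj d),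
      colimit.ι ((c.ι.app d).toFunctor ⋙ X) a ≫ eqToHom (hobj d).symm ≫ L.map δ ≫
          eqToHom (hobj d') =
        eqToHom (show X.obj ((c.ι.app d).toFunctor.obj a) =
              X.obj ((c.ι.app d').toFunctor.obj ((Φ.map δ).toFunctor.obj a)) by rw [← c.w δ]; rfl) ≫
          colimit.ι ((c.ι.app d').toFunctor ⋙ X) ((Φ.map δ).toFunctor.obj a))
    (u : colimit L ⟶ colimit X)
    (hu : ∀ d : D, colimit.ι L d ≫ u =
      eqToHom (hobj d) ≫ colimit.pre X (c.ι.app d).toFunctor) :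
    IsIso u := by
  let lift := liftToCostructuredArrow c X hobj (colimit.cocone L)
  let κ : Cocone Φ :=
    { pt := Cat.of (CostructuredArrow X (colimit L))
      ι.app d := (lift d).toCatHom
      ι.naturality _ _ δ := Cat.ext (map_comp_liftToCostructuredArrow c X hobj hmap _ δ) }
  have hκ (d : D) : (c.ι.app d).toFunctor ⋙ (hc.desc κ).toFunctor = lift d :=
    congrArg Hom.toFunctor (hc.fac κ d)
  obtain ⟨v, hv⟩ := exists_eq_colimit_toCostructuredArrow_comp_map X (hc.desc κ).toFunctor
    (functor_ext_of_isColimit hc fun d => congrArg (· ⋙ CostructuredArrow.proj _ _) (hκ d))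
  have hvu : (colimit.toCostructuredArrow X ⋙ CostructuredArrow.map v) ⋙
      CostructuredArrow.map u = colimit.toCostructuredArrow X := by
    rw [← hv]
    refine functor_ext_of_isColimit hc fun d => ?_
    exact (congrArg (· ⋙ CostructuredArrow.map u) (hκ d)).trans
      (liftToCostructuredArrow_comp_map c X hobj _ u hu d)
  refine ⟨v, colimit.hom_ext fun d => ?_, colimit.hom_ext fun x => ?_⟩
  · rw [← Category.assoc, hu, Category.comp_id, Category.assoc, eqToHom_comp_iff]
    exact pre_comp_eq_of_comp_map_eq c X hobj _ v d (hv ▸ hκ d)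
  · rw [Category.comp_id, ← Category.assoc]
    exact eq_of_heq (congr_arg_heq (fun Y : CostructuredArrow X (colimit X) => Y.hom)
      (Functor.congr_obj hvu x))
end

section
/- Let C be a finite directed category (finitely many objects and morphisms, with a dimension function into a linear order that strictly increases along every non-identity morphism) and let G be a generating set of morphisms of C (every morphism of C is a finite composite of morphisms of G) satisfying: (i) any two parallel morphisms belonging to G (morphisms in G with the same source and the same target) are equal; and (ii) every span ω ←φ τ →ψ υ with φ, ψ ∈ G can be completed to a commutative square by morphisms ψ* : ω → ς and φ* : υ → ς, each of which is either in G or an identity, with ψ* ∘ φ = φ* ∘ ψ. Then every connected component of C contains exactly one object that is terminal in that component. -/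
open CategoryTheory

universe w v u

variable {C : Type u} [Category.{v} C]

/-- The morphisms generated by a class `G` of morphisms: the smallest class
containing `G`, the identities, and closed under composition (finite
composites of morphisms of `G`). -/
inductive GeneratedBy (G : MorphismProperty C) : MorphismProperty C
  | of {a b : C} (f : a ⟶ b) : G f → GeneratedBy G f
  | id (a : C) : GeneratedBy G (𝟙 a)
  | comp {a b c : C} (f : a ⟶ b) (g : b ⟶ c) :
      GeneratedBy G f → GeneratedBy G g → GeneratedBy G (f ≫ g)

/-!
The diamond property of `G` propagates, by the usual strip argument, to confluence of all of `C`: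
every span completes to a cospan, and hence any two objects joined by a zigzag map to a common
object. Since `C` is finite and directed, every object maps to a maximal object (one with no
morphism to any other object). In a component every object then maps to any maximal object `t`,
so `t` is the only maximal object there. Finally, two morphisms `a ⟶ t` are equal by induction
on `dim a` downwards: both begin with a step of `G`, the diamond closes these two steps into a
commutative square whose apex maps to `t` by confluence, and the induction hypothesis identifies
the remaining legs with the composites through that apex.
-/

def DiamondProperty (G : MorphismProperty C) : Prop :=
  ∀ {τ ω υ : C} (φ : τ ⟶ ω) (ψ : τ ⟶ υ), G φ → G ψ →
    ∃ (ς : C) (ψs : ω ⟶ ς) (φs : υ ⟶ ς),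
      (G ψs ∨ ∃ h : ω = ς, ψs = eqToHom h) ∧
      (G φs ∨ ∃ h : υ = ς, φs = eqToHom h) ∧
      φ ≫ ψs = ψ ≫ φs

lemma Finite.wellFounded_gt_on {α β : Type*} [Finite α] [Preorder β] (f : α → β) :
    WellFounded fun x y : α => f y < f x :=
  have : IsTrans α fun x y => f y < f x := ⟨fun _ _ _ h₁ h₂ => h₂.trans h₁⟩
  have : Std.Irrefl fun x y : α => f y < f x := ⟨fun _ => lt_irrefl _⟩
  Finite.wellFounded_of_trans_of_irrefl _

def IsMaximalObject (t : C) : Prop :=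
  ∀ ⦃x : C⦄, (t ⟶ x) → t = x

section

variable {G : MorphismProperty C}

namespace DiamondProperty

-- The new edge `u` has the same shape as in the diamond, so that the induction can continue
-- along the next factor of a composite.
lemma strip (hG : DiamondProperty G) {a b : C} {f : a ⟶ b} (hf : GeneratedBy G f)
    {c : C} (ψ : a ⟶ c) (hψ : G ψ) :
    ∃ d : C, (b = d ∨ ∃ u : b ⟶ d, G u) ∧ Nonempty (c ⟶ d) := by
  induction hf generalizing c with
  | of f hf =>
    obtain ⟨ς, ψs, φs, hψs, -, -⟩ := hG f ψ hf hψ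
    refine ⟨ς, ?_, ⟨φs⟩⟩
    rcases hψs with hψs | ⟨h, -⟩
    exacts [Or.inr ⟨ψs, hψs⟩, Or.inl h]
  | id a => exact ⟨c, Or.inr ⟨ψ, hψ⟩, ⟨𝟙 c⟩⟩
  | comp f g _ _ ihf ihg =>
    obtain ⟨d₁, hu₁ | ⟨u₁, hu₁⟩, ⟨v₁⟩⟩ := ihf ψ hψ
    · subst hu₁
      exact ⟨_, Or.inl rfl, ⟨v₁ ≫ g⟩⟩
    · obtain ⟨d₂, hu₂, ⟨v₂⟩⟩ := ihg u₁ hu₁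
      exact ⟨d₂, hu₂, ⟨v₁ ≫ v₂⟩⟩

variable (hgen : ∀ {a b : C} (f : a ⟶ b), GeneratedBy G f)
include hgen

lemma exists_common_target (hG : DiamondProperty G) {a b c : C} (f : a ⟶ b) (g : a ⟶ c) :
    ∃ d : C, Nonempty (b ⟶ d) ∧ Nonempty (c ⟶ d) := by
  induction hgen g generalizing b with
  | of g hg =>
    obtain ⟨d, hu | ⟨u, -⟩, hv⟩ := hG.strip (hgen f) g hg
    · subst hu
      exact ⟨_, ⟨𝟙 _⟩, hv⟩
    · exact ⟨d, ⟨u⟩, hv⟩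
  | id a => exact ⟨b, ⟨𝟙 b⟩, ⟨f⟩⟩
  | comp g₁ g₂ _ _ ih₁ ih₂ =>
    obtain ⟨d₁, ⟨w₁⟩, ⟨w₂⟩⟩ := ih₁ f
    obtain ⟨d₂, ⟨x₁⟩, ⟨x₂⟩⟩ := ih₂ w₂
    exact ⟨d₂, ⟨w₁ ≫ x₁⟩, ⟨x₂⟩⟩

lemma exists_common_target_of_zigzag (hG : DiamondProperty G) {a b : C} (h : Zigzag a b) :
    ∃ d : C, Nonempty (a ⟶ d) ∧ Nonempty (b ⟶ d) := by
  induction h with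
  | refl => exact ⟨a, ⟨𝟙 a⟩, ⟨𝟙 a⟩⟩
  | tail _ hbc ih =>
    obtain ⟨d, ⟨u⟩, ⟨v⟩⟩ := ih
    rcases hbc with ⟨⟨f⟩⟩ | ⟨⟨f⟩⟩
    · obtain ⟨e, ⟨p⟩, ⟨q⟩⟩ := hG.exists_common_target hgen v f
      exact ⟨e, ⟨u ≫ p⟩, ⟨q⟩⟩
    · exact ⟨d, ⟨u⟩, ⟨f ≫ v⟩⟩

lemma nonempty_hom_of_zigzag (hG : DiamondProperty G) {b t : C} (h : Zigzag b t)
    (ht : IsMaximalObject t) : Nonempty (b ⟶ t) := by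
  obtain ⟨d, hb, ⟨v⟩⟩ := hG.exists_common_target_of_zigzag hgen h
  rwa [ht v]

end DiamondProperty

lemma GeneratedBy.exists_eq_comp_of_ne (hdim' : ∀ {a : C} (f : a ⟶ a), f = 𝟙 a)
    {a b : C} {f : a ⟶ b} (hf : GeneratedBy G f) (hab : a ≠ b) :
    ∃ (c : C) (φ : a ⟶ c) (f' : c ⟶ b), G φ ∧ a ≠ c ∧ f = φ ≫ f' := by
  induction hf with
  | of f hf => exact ⟨_, f, 𝟙 _, hf, hab, (Category.comp_id f).symm⟩
  | id a => exact absurd rfl hab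
  | @comp a m b f g _ _ ihf ihg =>
    by_cases ham : a = m
    · subst ham
      obtain ⟨c, φ, g', hφ, hac, rfl⟩ := ihg hab
      exact ⟨c, φ, g', hφ, hac, by rw [hdim' f, Category.id_comp]⟩
    · obtain ⟨c, φ, f', hφ, hac, rfl⟩ := ihf ham
      exact ⟨c, φ, f' ≫ g, hφ, hac, Category.assoc _ _ _⟩

variable [Finite C] {L : Type w} [LinearOrder L] {dim : C → L}
  (hdim : ∀ {a b : C} (_f : a ⟶ b), a ≠ b → dim a < dim b)
include hdim

lemma exists_isMaximalObject_hom (a : C) : ∃ t : C, IsMaximalObject t ∧ Nonempty (a ⟶ t) := by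
  induction a using (Finite.wellFounded_gt_on dim).induction with
  | _ a ih =>
    by_cases ha : IsMaximalObject a
    · exact ⟨a, ha, ⟨𝟙 a⟩⟩
    · obtain ⟨x, f, hax⟩ : ∃ (x : C) (_f : a ⟶ x), a ≠ x := by
        simpa [IsMaximalObject] using ha
      obtain ⟨t, ht, ⟨g⟩⟩ := ih x (hdim f hax)
      exact ⟨t, ht, ⟨f ≫ g⟩⟩

lemma hom_ext_of_isMaximalObject (hdim' : ∀ {a : C} (f : a ⟶ a), f = 𝟙 a)
    (hgen : ∀ {a b : C} (f : a ⟶ b), GeneratedBy G f) (hG : DiamondProperty G)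
    {b : C} (hb : IsMaximalObject b) {a : C} (f g : a ⟶ b) : f = g := by
  induction a using (Finite.wellFounded_gt_on dim).induction with
  | _ a ih =>
    by_cases hab : a = b
    · subst hab
      rw [hdim' f, hdim' g]
    obtain ⟨c, φ, f', hφ, hac, rfl⟩ := (hgen f).exists_eq_comp_of_ne hdim' hab
    obtain ⟨d, ψ, g', hψ, had, rfl⟩ := (hgen g).exists_eq_comp_of_ne hdim' hab
    obtain ⟨ς, ψs, φs, -, -, hcomm⟩ := hG φ ψ hφ hψ
    obtain ⟨k⟩ : Nonempty (ς ⟶ b) :=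
      hG.nonempty_hom_of_zigzag hgen ((Zigzag.of_inv ψs).trans (Zigzag.of_hom f')) hb
    calc φ ≫ f' = φ ≫ ψs ≫ k := by rw [ih c (hdim φ hac) f' (ψs ≫ k)]
      _ = ψ ≫ φs ≫ k := by rw [← Category.assoc, hcomm, Category.assoc]
      _ = ψ ≫ g' := by rw [ih d (hdim ψ had) g' (φs ≫ k)]

end

/-- Let `C` be a finite directed category (finitely many objects and morphisms,
with a dimension function into a linear order which strictly increases along
non-identity morphisms), and `G` a generating set of morphisms satisfying:
(i) parallel morphisms of `G` are equal, and (ii) every span of morphisms of `G`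
can be completed to a commutative square by morphisms each of which belongs to
`G` or is an identity. Then every connected component of `C` contains exactly
one object which is terminal in that component. -/
theorem statement_18 [Finite C] [∀ a b : C, Finite (a ⟶ b)]
    {L : Type w} [LinearOrder L] (dim : C → L)
    (hdim : ∀ {a b : C} (_f : a ⟶ b), a ≠ b → dim a < dim b)
    (hdim' : ∀ {a : C} (f : a ⟶ a), f = 𝟙 a)
    (G : MorphismProperty C)
    (hgen : ∀ {a b : C} (f : a ⟶ b), GeneratedBy G f)
    (hpar : ∀ {a b : C} (f g : a ⟶ b), G f → G g → f = g)
    (hdiamond : ∀ {τ ω υ : C} (φ : τ ⟶ ω) (ψ : τ ⟶ υ), G φ → G ψ →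
      ∃ (ς : C) (ψs : ω ⟶ ς) (φs : υ ⟶ ς),
        (G ψs ∨ ∃ h : ω = ς, ψs = eqToHom h) ∧
        (G φs ∨ ∃ h : υ = ς, φs = eqToHom h) ∧
        φ ≫ ψs = ψ ≫ φs) :
    ∀ a : C, ∃! t : C, Zigzag a t ∧
      ∀ b : C, Zigzag b t → ∃! _f : b ⟶ t, True := by
  have hG : DiamondProperty G := hdiamond
  intro a
  obtain ⟨t, ht, ⟨f⟩⟩ := exists_isMaximalObject_hom hdim a
  refine ⟨t, ⟨.of_hom f, fun b hbt => ?_⟩, fun t' ⟨hat', hterm'⟩ => ?_⟩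
  · obtain ⟨g⟩ := hG.nonempty_hom_of_zigzag hgen hbt ht
    exact ⟨g, trivial, fun g' _ => hom_ext_of_isMaximalObject hdim hdim' hgen hG ht g' g⟩
  · obtain ⟨u, -, -⟩ := hterm' t ((Zigzag.of_hom f).symm.trans hat')
    exact (ht u).symm
end
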